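/- arXiv:math/9906026 — 8 statements merged into one kernel-verified Lean document; each statement's English description precedes it below -/
import Mathlib

section
/- Let K₁, K₂, K₃ ∈ SU(2) satisfy K₁K₂K₃ = 1, and let θᵢ = arccos(Re(tr Kᵢ)/2) ∈ [0, π]. Then the following four inequalities hold: θ₁ + θ₂ + θ₃ ≤ 2π, θ₁ + θ₂ − θ₃ ≥ 0, θ₁ − θ₂ + θ₃ ≥ 0, and −θ₁ + θ₂ + θ₃ ≥ 0. -/
open Matrix Real

/-!
Write `K ∈ SU(2)` as `[[a, b], [-b̄, ā]]` with `|a|² + |b|² = 1`, so that `cos θ(K) = Re a` and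
`sin θ(K) = ‖(Im a, b)‖`. The `(0,0)` entry of `K₁K₂` is `a₁a₂ - b₁b̄₂`, whose real part is
`cos θ₁ cos θ₂` minus a real inner product of two vectors of lengths `sin θ₁` and `sin θ₂`.
By Cauchy–Schwarz, `cos (θ₁ + θ₂) ≤ cos θ(K₁K₂) ≤ cos (θ₁ - θ₂)`, and `θ(K₃) = θ(K₁K₂)` because
`K₃ = (K₁K₂)ᴴ`. Since `cos` is decreasing on `[0, π]` and `cos (θ₁ + θ₂) = cos (2π - θ₁ - θ₂)`,
these two bounds are exactly the four inequalities.
-/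

lemma abs_mul_add_mul_add_mul_le_sqrt_mul_sqrt (u p q v r s : ℝ) :
    |u * v + p * r + q * s| ≤ √(u ^ 2 + p ^ 2 + q ^ 2) * √(v ^ 2 + r ^ 2 + s ^ 2) := by
  rw [← Real.sqrt_mul (by positivity)]
  apply Real.abs_le_sqrt
  nlinarith [sq_nonneg (u * r - p * v), sq_nonneg (u * s - q * v), sq_nonneg (p * s - q * r)]

lemma cos_arccos_add_le_re_mul_sub_mul_conj {a b c d : ℂ}
    (hab : Complex.normSq a + Complex.normSq b = 1)
    (hcd : Complex.normSq c + Complex.normSq d = 1) :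
    cos (arccos a.re + arccos c.re) ≤ (a * c - b * star d).re ∧
      (a * c - b * star d).re ≤ cos (arccos a.re - arccos c.re) := by
  rw [Complex.normSq_apply, Complex.normSq_apply] at hab hcd
  have hsin_a : √(1 - a.re ^ 2) = √(a.im ^ 2 + b.re ^ 2 + b.im ^ 2) := by congr 1; linarith
  have hsin_c : √(1 - c.re ^ 2) = √(c.im ^ 2 + d.re ^ 2 + d.im ^ 2) := by congr 1; linarith
  have hcs := abs_le.mp (abs_mul_add_mul_add_mul_le_sqrt_mul_sqrt a.im b.re b.im c.im d.re d.im)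
  rw [cos_add, cos_sub, cos_arccos (by nlinarith) (by nlinarith),
    cos_arccos (by nlinarith) (by nlinarith), sin_arccos, sin_arccos, hsin_a, hsin_c]
  simp only [Complex.sub_re, Complex.mul_re, Complex.star_def, Complex.conj_re, Complex.conj_im]
  constructor <;> linarith

lemma conjTranspose_eq_adjugate_of_mem_specialUnitaryGroup {n α : Type*} [Fintype n]
    [DecidableEq n] [CommRing α] [StarRing α] {K : Matrix n n α}
    (hK : K ∈ specialUnitaryGroup n α) : Kᴴ = K.adjugate := by
  obtain ⟨hunitary, hdet⟩ := mem_specialUnitaryGroup_iff.mp hK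
  refine left_inv_eq_right_inv (mem_unitaryGroup_iff'.mp hunitary) ?_
  rw [mul_adjugate, hdet, one_smul]

lemma entries_of_mem_specialUnitaryGroup_fin_two {K : Matrix (Fin 2) (Fin 2) ℂ}
    (hK : K ∈ specialUnitaryGroup (Fin 2) ℂ) :
    K 1 1 = star (K 0 0) ∧ K 1 0 = -star (K 0 1) ∧
      Complex.normSq (K 0 0) + Complex.normSq (K 0 1) = 1 := by
  have hadj := conjTranspose_eq_adjugate_of_mem_specialUnitaryGroup hK
  rw [adjugate_fin_two] at hadj
  have h11 : K 1 1 = star (K 0 0) := by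
    simpa [conjTranspose_apply] using (congrFun (congrFun hadj 0) 0).symm
  have h10 : K 1 0 = -star (K 0 1) := by
    simpa [conjTranspose_apply] using congrArg star (congrFun (congrFun hadj 0) 1)
  refine ⟨h11, h10, ?_⟩
  have hdet := (mem_specialUnitaryGroup_iff.mp hK).2
  rw [det_fin_two, h11, h10] at hdet
  have hnormSq : ((Complex.normSq (K 0 0) + Complex.normSq (K 0 1) : ℝ) : ℂ) = 1 := by
    push_cast [← Complex.mul_conj, ← Complex.star_def]
    linear_combination hdet
  exact_mod_cast hnormSq

noncomputable def su2Angle (K : Matrix (Fin 2) (Fin 2) ℂ) : ℝ := arccos ((trace K).re / 2)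

lemma su2Angle_mem_Icc (K : Matrix (Fin 2) (Fin 2) ℂ) : su2Angle K ∈ Set.Icc 0 π :=
  ⟨arccos_nonneg _, arccos_le_pi _⟩

lemma re_trace_div_two_of_mem_specialUnitaryGroup {K : Matrix (Fin 2) (Fin 2) ℂ}
    (hK : K ∈ specialUnitaryGroup (Fin 2) ℂ) : (trace K).re / 2 = (K 0 0).re := by
  rw [trace_fin_two, (entries_of_mem_specialUnitaryGroup_fin_two hK).1, Complex.add_re,
    Complex.star_def, Complex.conj_re]
  ring

lemma cos_su2Angle {K : Matrix (Fin 2) (Fin 2) ℂ} (hK : K ∈ specialUnitaryGroup (Fin 2) ℂ) :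
    cos (su2Angle K) = (trace K).re / 2 := by
  have hre := abs_le.mp ((Complex.abs_re_le_norm _).trans (entry_norm_bound_of_unitary hK.1 0 0))
  rw [su2Angle, re_trace_div_two_of_mem_specialUnitaryGroup hK, cos_arccos hre.1 hre.2]

lemma su2Angle_eq_of_mul_eq_one {M K : Matrix (Fin 2) (Fin 2) ℂ}
    (hM : M ∈ unitaryGroup (Fin 2) ℂ) (h : M * K = 1) : su2Angle K = su2Angle M := by
  rw [su2Angle, su2Angle, ← left_inv_eq_right_inv (mem_unitaryGroup_iff'.mp hM) h,
    star_eq_conjTranspose, trace_conjTranspose, Complex.star_def, Complex.conj_re]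

lemma cos_su2Angle_add_le_cos_su2Angle_mul {K L : Matrix (Fin 2) (Fin 2) ℂ}
    (hK : K ∈ specialUnitaryGroup (Fin 2) ℂ) (hL : L ∈ specialUnitaryGroup (Fin 2) ℂ) :
    cos (su2Angle K + su2Angle L) ≤ cos (su2Angle (K * L)) ∧
      cos (su2Angle (K * L)) ≤ cos (su2Angle K - su2Angle L) := by
  obtain ⟨-, -, hK_norm⟩ := entries_of_mem_specialUnitaryGroup_fin_two hK
  obtain ⟨-, hL₁₀, hL_norm⟩ := entries_of_mem_specialUnitaryGroup_fin_two hL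
  have hKL : (K * L) 0 0 = K 0 0 * L 0 0 - K 0 1 * star (L 0 1) := by
    rw [mul_apply, Fin.sum_univ_two, hL₁₀]; ring
  rw [cos_su2Angle (mul_mem hK hL), su2Angle, su2Angle,
    re_trace_div_two_of_mem_specialUnitaryGroup (mul_mem hK hL), hKL,
    re_trace_div_two_of_mem_specialUnitaryGroup hK, re_trace_div_two_of_mem_specialUnitaryGroup hL]
  exact cos_arccos_add_le_re_mul_sub_mul_conj hK_norm hL_norm

lemma tetrahedron_of_cos_add_le_cos_le_cos_sub {θ₁ θ₂ θ₃ : ℝ} (h₁ : θ₁ ∈ Set.Icc 0 π)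
    (h₂ : θ₂ ∈ Set.Icc 0 π) (h₃ : θ₃ ∈ Set.Icc 0 π) (hlo : cos (θ₁ + θ₂) ≤ cos θ₃)
    (hhi : cos θ₃ ≤ cos (θ₁ - θ₂)) :
    θ₁ + θ₂ + θ₃ ≤ 2 * π ∧ 0 ≤ θ₁ + θ₂ - θ₃ ∧ 0 ≤ θ₁ - θ₂ + θ₃ ∧ 0 ≤ -θ₁ + θ₂ + θ₃ := by
  obtain ⟨h₁₀, h₁π⟩ := h₁
  obtain ⟨h₂₀, h₂π⟩ := h₂
  have hdiff : |θ₁ - θ₂| ≤ θ₃ := by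
    rw [← cos_abs (θ₁ - θ₂)] at hhi
    exact (strictAntiOn_cos.le_iff_ge h₃
      ⟨abs_nonneg _, abs_le.mpr ⟨by linarith, by linarith⟩⟩).mp hhi
  have hsum : θ₃ ≤ θ₁ + θ₂ ∧ θ₃ ≤ 2 * π - (θ₁ + θ₂) := by
    rcases le_total (θ₁ + θ₂) π with hle | hge
    · exact ⟨(strictAntiOn_cos.le_iff_ge ⟨by linarith, hle⟩ h₃).mp hlo, by linarith [h₃.2]⟩
    · rw [← cos_two_pi_sub] at hlo
      exact ⟨by linarith [h₃.2],
        (strictAntiOn_cos.le_iff_ge ⟨by linarith, by linarith⟩ h₃).mp hlo⟩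
  obtain ⟨hdiff₁, hdiff₂⟩ := abs_le.mp hdiff
  exact ⟨by linarith, by linarith, by linarith, by linarith⟩

theorem trinion_angles_in_tetrahedron_general
    (K₁ K₂ K₃ : Matrix (Fin 2) (Fin 2) ℂ)
    (h₁ : K₁ ∈ Matrix.specialUnitaryGroup (Fin 2) ℂ)
    (h₂ : K₂ ∈ Matrix.specialUnitaryGroup (Fin 2) ℂ)
    (hprod : K₁ * K₂ * K₃ = 1)
    (θ₁ θ₂ θ₃ : ℝ)
    (hθ₁ : θ₁ = Real.arccos ((Matrix.trace K₁).re / 2))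
    (hθ₂ : θ₂ = Real.arccos ((Matrix.trace K₂).re / 2))
    (hθ₃ : θ₃ = Real.arccos ((Matrix.trace K₃).re / 2)) :
    θ₁ + θ₂ + θ₃ ≤ 2 * Real.pi ∧ 0 ≤ θ₁ + θ₂ - θ₃ ∧
      0 ≤ θ₁ - θ₂ + θ₃ ∧ 0 ≤ -θ₁ + θ₂ + θ₃ := by
  have hθ₃' : θ₃ = su2Angle (K₁ * K₂) :=
    hθ₃.trans (su2Angle_eq_of_mul_eq_one (mul_mem h₁ h₂).1 hprod)
  obtain ⟨hlo, hhi⟩ := cos_su2Angle_add_le_cos_su2Angle_mul h₁ h₂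
  subst hθ₁ hθ₂ hθ₃'
  exact tetrahedron_of_cos_add_le_cos_le_cos_sub (su2Angle_mem_Icc K₁) (su2Angle_mem_Icc K₂)
    (su2Angle_mem_Icc _) hlo hhi

/-- If `K₁ K₂ K₃ = 1` in `SU(2)` and `θᵢ = arccos(Re(tr Kᵢ)/2) ∈ [0, π]`
are the corresponding angles, then the four inequalities cutting out the tetrahedron `Γ`
hold: `θ₁+θ₂+θ₃ ≤ 2π`, `θ₁+θ₂−θ₃ ≥ 0`, `θ₁−θ₂+θ₃ ≥ 0`, `−θ₁+θ₂+θ₃ ≥ 0`. -/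
theorem trinion_angles_in_tetrahedron
    (K₁ K₂ K₃ : Matrix (Fin 2) (Fin 2) ℂ)
    (h₁ : K₁ ∈ Matrix.specialUnitaryGroup (Fin 2) ℂ)
    (h₂ : K₂ ∈ Matrix.specialUnitaryGroup (Fin 2) ℂ)
    (h₃ : K₃ ∈ Matrix.specialUnitaryGroup (Fin 2) ℂ)
    (hprod : K₁ * K₂ * K₃ = 1)
    (θ₁ θ₂ θ₃ : ℝ)
    (hθ₁ : θ₁ = Real.arccos ((Matrix.trace K₁).re / 2))
    (hθ₂ : θ₂ = Real.arccos ((Matrix.trace K₂).re / 2))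
    (hθ₃ : θ₃ = Real.arccos ((Matrix.trace K₃).re / 2)) :
    θ₁ + θ₂ + θ₃ ≤ 2 * Real.pi ∧ 0 ≤ θ₁ + θ₂ - θ₃ ∧
      0 ≤ θ₁ - θ₂ + θ₃ ∧ 0 ≤ -θ₁ + θ₂ + θ₃ :=
  trinion_angles_in_tetrahedron_general K₁ K₂ K₃ h₁ h₂ hprod θ₁ θ₂ θ₃ hθ₁ hθ₂ hθ₃
end

section
/- Let (θ₁, θ₂, θ₃) ∈ [0, π]³ satisfy θ₁ + θ₂ + θ₃ ≤ 2π, θ₁ + θ₂ − θ₃ ≥ 0, θ₁ − θ₂ + θ₃ ≥ 0, and −θ₁ + θ₂ + θ₃ ≥ 0. Then there exist K₁, K₂, K₃ ∈ SU(2) with K₁K₂K₃ = 1 and arccos(Re(tr Kᵢ)/2) = θᵢ for i = 1, 2, 3. -/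
open Matrix Real Complex

noncomputable def eθ (θ : ℝ) : ℂ := Complex.exp (θ * Complex.I)

lemma eθ_mul (θ φ : ℝ) : eθ θ * eθ φ = eθ (θ + φ) := by
  simp [eθ, ← Complex.exp_add]; ring_nf

lemma eθ_zero : eθ 0 = 1 := by simp [eθ]

lemma star_eθ (θ : ℝ) : star (eθ θ) = eθ (-θ) := by
  simp [eθ, ← Complex.exp_conj, _root_.map_mul]

lemma eθ_re (θ : ℝ) : (eθ θ).re = Real.cos θ := Complex.exp_ofReal_mul_I_re θ

noncomputable def Dm (θ : ℝ) : Matrix (Fin 2) (Fin 2) ℂ := !![eθ θ, 0; 0, eθ (-θ)]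

lemma star_Dm (θ : ℝ) : star (Dm θ) = Dm (-θ) := by
  ext i j
  fin_cases i <;> fin_cases j <;>
    simp [Dm, Matrix.star_apply, star_eθ]

lemma Dm_mul (θ φ : ℝ) : Dm θ * Dm φ = Dm (θ + φ) := by
  simp [Dm, Matrix.mul_fin_two, eθ_mul]
  ring_nf

lemma Dm_mem (θ : ℝ) : Dm θ ∈ Matrix.specialUnitaryGroup (Fin 2) ℂ := by
  rw [Matrix.mem_specialUnitaryGroup_iff, Matrix.mem_unitaryGroup_iff]
  refine ⟨?_, ?_⟩
  · rw [star_Dm, Dm_mul]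
    simp [Dm, eθ_zero, Matrix.one_fin_two]
  · simp [Dm, Matrix.det_fin_two_of, eθ_mul, eθ_zero]

def Rm (a b : ℝ) : Matrix (Fin 2) (Fin 2) ℂ := !![(a:ℂ), -b; b, a]

lemma star_Rm (a b : ℝ) : star (Rm a b) = Rm a (-b) := by
  ext i j
  fin_cases i <;> fin_cases j <;>
    simp [Rm, Matrix.star_apply]

lemma Rm_mul (a b : ℝ) (h : a^2 + b^2 = 1) : Rm a b * Rm a (-b) = 1 := by
  have h' : (a:ℂ)^2 + (b:ℂ)^2 = 1 := by exact_mod_cast congrArg (Complex.ofReal) h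
  ext i j
  fin_cases i <;> fin_cases j <;>
    simp [Rm, Matrix.mul_apply, Fin.sum_univ_two, Matrix.one_apply] <;>
    first | linear_combination h' | ring

lemma Rm_mem (a b : ℝ) (h : a^2 + b^2 = 1) : Rm a b ∈ Matrix.specialUnitaryGroup (Fin 2) ℂ := by
  have h' : (a:ℂ)^2 + (b:ℂ)^2 = 1 := by exact_mod_cast congrArg (Complex.ofReal) h
  rw [Matrix.mem_specialUnitaryGroup_iff, Matrix.mem_unitaryGroup_iff]
  refine ⟨by rw [star_Rm, Rm_mul a b h], ?_⟩
  simp [Rm, Matrix.det_fin_two_of]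
  linear_combination h'

lemma Dm_zero : Dm 0 = 1 := by
  simp [Dm, eθ_zero, Matrix.one_fin_two]

/-- Every point `(θ₁, θ₂, θ₃)` of the tetrahedron `Γ ⊂ [0, π]³` cut out by
`θ₁+θ₂+θ₃ ≤ 2π`, `θ₁+θ₂−θ₃ ≥ 0`, `θ₁−θ₂+θ₃ ≥ 0`, `−θ₁+θ₂+θ₃ ≥ 0` arises from a
representation of the trinion group: there are `K₁, K₂, K₃ ∈ SU(2)` with `K₁K₂K₃ = 1`
whose angles `arccos(Re(tr Kᵢ)/2)` are the `θᵢ`. -/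
theorem tetrahedron_point_realized_by_su2_triple
    (θ₁ θ₂ θ₃ : ℝ)
    (hθ₁ : θ₁ ∈ Set.Icc 0 Real.pi) (hθ₂ : θ₂ ∈ Set.Icc 0 Real.pi)
    (hθ₃ : θ₃ ∈ Set.Icc 0 Real.pi)
    (hsum : θ₁ + θ₂ + θ₃ ≤ 2 * Real.pi)
    (h12 : 0 ≤ θ₁ + θ₂ - θ₃) (h13 : 0 ≤ θ₁ - θ₂ + θ₃) (h23 : 0 ≤ -θ₁ + θ₂ + θ₃) :
    ∃ K₁ K₂ K₃ : Matrix (Fin 2) (Fin 2) ℂ,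
      K₁ ∈ Matrix.specialUnitaryGroup (Fin 2) ℂ ∧
      K₂ ∈ Matrix.specialUnitaryGroup (Fin 2) ℂ ∧
      K₃ ∈ Matrix.specialUnitaryGroup (Fin 2) ℂ ∧
      K₁ * K₂ * K₃ = 1 ∧
      Real.arccos ((Matrix.trace K₁).re / 2) = θ₁ ∧
      Real.arccos ((Matrix.trace K₂).re / 2) = θ₂ ∧
      Real.arccos ((Matrix.trace K₃).re / 2) = θ₃ := by
  obtain ⟨h1l, h1r⟩ := hθ₁
  obtain ⟨h2l, h2r⟩ := hθ₂
  obtain ⟨h3l, h3r⟩ := hθ₃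
  set c1 := Real.cos (θ₁ + θ₂) with hc1def
  set c2 := Real.cos (θ₁ - θ₂) with hc2def
  set c3 := Real.cos θ₃ with hc3def
  -- sandwich
  have hs2 : c3 ≤ c2 := by
    rcases le_total θ₂ θ₁ with h | h
    · exact Real.cos_le_cos_of_nonneg_of_le_pi (by linarith) h3r (by linarith)
    · rw [hc2def, show θ₁ - θ₂ = -(θ₂ - θ₁) by ring, Real.cos_neg]
      exact Real.cos_le_cos_of_nonneg_of_le_pi (by linarith) h3r (by linarith)
  have hs1 : c1 ≤ c3 := by
    rcases le_total (θ₁ + θ₂) Real.pi with h | h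
    · exact Real.cos_le_cos_of_nonneg_of_le_pi h3l (by linarith) (by linarith)
    · rw [hc1def, show θ₁ + θ₂ = 2 * Real.pi - (2 * Real.pi - (θ₁ + θ₂)) by ring,
        Real.cos_two_pi_sub]
      exact Real.cos_le_cos_of_nonneg_of_le_pi h3l (by linarith) (by linarith)
  set t := (c2 - c3) / (c2 - c1) with htdef
  have ht0 : 0 ≤ t := div_nonneg (by linarith) (by linarith)
  have ht1 : t ≤ 1 := by
    by_cases hd : c2 - c1 = 0
    · rw [htdef, hd, div_zero]; norm_num
    · rw [htdef, div_le_one (lt_of_le_of_ne (by linarith) (Ne.symm hd))]; linarith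
  have hteq : t * c1 + (1 - t) * c2 = c3 := by
    by_cases hd : c2 - c1 = 0
    · have hcc : c3 = c2 := le_antisymm hs2 (by linarith)
      rw [htdef, hd, div_zero]
      linarith
    · have hmc : t * (c2 - c1) = c2 - c3 := div_mul_cancel₀ _ hd
      nlinarith [hmc]
  set a := Real.sqrt t with hadef
  set b := Real.sqrt (1 - t) with hbdef
  have ha2 : a ^ 2 = t := Real.sq_sqrt ht0
  have hb2 : b ^ 2 = 1 - t := Real.sq_sqrt (by linarith)
  have hab : a ^ 2 + b ^ 2 = 1 := by rw [ha2, hb2]; ring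
  have hab' : a ^ 2 + (-b) ^ 2 = 1 := by rw [neg_pow]; simpa using hab
  refine ⟨Dm θ₁, Rm a b * Dm θ₂ * Rm a (-b),
    Rm a b * Dm (-θ₂) * Rm a (-b) * Dm (-θ₁), Dm_mem θ₁,
    mul_mem (mul_mem (Rm_mem a b hab) (Dm_mem θ₂)) (Rm_mem a (-b) hab'),
    mul_mem (mul_mem (mul_mem (Rm_mem a b hab) (Dm_mem (-θ₂))) (Rm_mem a (-b) hab'))
      (Dm_mem (-θ₁)), ?_, ?_, ?_, ?_⟩
  · -- product is 1
    have hRR' : Rm a b * Rm a (-b) = 1 := Rm_mul a b hab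
    have hR'R : Rm a (-b) * Rm a b = 1 := by
      have := Rm_mul a (-b) hab'
      simpa using this
    have c1' : ∀ X : Matrix (Fin 2) (Fin 2) ℂ, Rm a (-b) * (Rm a b * X) = X := fun X => by
      rw [← mul_assoc, hR'R, one_mul]
    have c2' : ∀ X : Matrix (Fin 2) (Fin 2) ℂ, Rm a b * (Rm a (-b) * X) = X := fun X => by
      rw [← mul_assoc, hRR', one_mul]
    have c3' : ∀ (φ : ℝ) (X : Matrix (Fin 2) (Fin 2) ℂ), Dm φ * (Dm (-φ) * X) = X :=
      fun φ X => by rw [← mul_assoc, Dm_mul, add_neg_cancel, Dm_zero, one_mul]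
    simp only [mul_assoc]
    rw [c1', c3', c2', Dm_mul, add_neg_cancel, Dm_zero]
  · -- trace 1
    rw [show Matrix.trace (Dm θ₁) = eθ θ₁ + eθ (-θ₁) by simp [Dm, Matrix.trace_fin_two_of]]
    simp [eθ_re, Real.cos_neg]
    exact Real.arccos_cos h1l h1r
  · -- trace 2
    have htr : Matrix.trace (Rm a b * Dm θ₂ * Rm a (-b))
        = ((a:ℂ)^2 + (b:ℂ)^2) * (eθ θ₂ + eθ (-θ₂)) := by
      simp [Rm, Dm, Matrix.mul_fin_two, Matrix.trace_fin_two_of]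
      ring
    have hab'' : ((a:ℂ)^2 + (b:ℂ)^2) = 1 := by exact_mod_cast congrArg (Complex.ofReal) hab
    rw [htr, hab'', one_mul]
    simp [eθ_re, Real.cos_neg]
    exact Real.arccos_cos h2l h2r
  · -- trace 3
    have m1 : eθ (θ₁ + θ₂) = eθ θ₁ * eθ θ₂ := (eθ_mul _ _).symm
    have m2 : eθ (-(θ₁ + θ₂)) = eθ (-θ₁) * eθ (-θ₂) := by
      rw [eθ_mul, ← neg_add]
    have m3 : eθ (θ₁ - θ₂) = eθ θ₁ * eθ (-θ₂) := by
      rw [eθ_mul, ← sub_eq_add_neg]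
    have m4 : eθ (-(θ₁ - θ₂)) = eθ (-θ₁) * eθ θ₂ := by
      rw [eθ_mul, ← sub_eq_neg_add, neg_sub]
    have htr : Matrix.trace (Rm a b * Dm (-θ₂) * Rm a (-b) * Dm (-θ₁))
        = (a:ℂ)^2 * (eθ (θ₁ + θ₂) + eθ (-(θ₁ + θ₂)))
          + (b:ℂ)^2 * (eθ (θ₁ - θ₂) + eθ (-(θ₁ - θ₂))) := by
      simp only [Rm, Dm, Matrix.mul_fin_two, Matrix.trace_fin_two_of, m1, m2, m3, m4, neg_neg]
      push_cast
      ring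
    have hq : ∀ (x y : ℝ), ((x:ℂ) ^ 2 * (eθ y + eθ (-y))).re = x ^ 2 * (2 * Real.cos y) := by
      intro x y
      rw [show ((x:ℂ) ^ 2) = ((x ^ 2 : ℝ) : ℂ) by push_cast; ring, Complex.re_ofReal_mul,
        Complex.add_re, eθ_re, eθ_re, Real.cos_neg]
      ring
    rw [htr, Complex.add_re, hq, hq, ha2, hb2, ← hc1def, ← hc2def]
    rw [show (t * (2 * c1) + (1 - t) * (2 * c2)) / 2 = t * c1 + (1 - t) * c2 by ring, hteq]
    exact Real.arccos_cos h3l h3r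
end

section
/- Let K₁, K₂, K₃ ∈ SU(2) satisfy K₁K₂K₃ = 1, and let θᵢ = arccos(Re(tr Kᵢ)/2) ∈ [0, π]. Then there exists a one-dimensional subspace of ℂ² invariant under K₁, K₂ and K₃ (i.e. the triple is reducible) if and only if at least one of the following equalities holds: θ₁ + θ₂ + θ₃ = 2π, θ₃ = θ₁ + θ₂, θ₂ = θ₁ + θ₃, or θ₁ = θ₂ + θ₃. -/
open Matrix Real


lemma su2_entries {K : Matrix (Fin 2) (Fin 2) ℂ}
    (h : K ∈ Matrix.specialUnitaryGroup (Fin 2) ℂ) :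
    ∃ a b : ℂ, K = !![a, b; -(starRingEnd ℂ) b, (starRingEnd ℂ) a] ∧
      a.re ^ 2 + a.im ^ 2 + b.re ^ 2 + b.im ^ 2 = 1 := by
  rw [Matrix.mem_specialUnitaryGroup_iff] at h
  obtain ⟨hu, hd⟩ := h
  have hu' := Matrix.mem_unitaryGroup_iff.mp hu
  have hu'' := Matrix.mem_unitaryGroup_iff'.mp hu
  have hadj : K * adjugate K = 1 := by
    rw [Matrix.mul_adjugate, hd, one_smul]
  have hstar : star K = adjugate K := by
    calc star K = star K * (K * adjugate K) := by rw [hadj, mul_one]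
    _ = (star K * K) * adjugate K := by rw [mul_assoc]
    _ = adjugate K := by rw [hu'', one_mul]
  have h10 : K 1 0 = -(starRingEnd ℂ) (K 0 1) := by
    have := congrFun (congrFun hstar 1) 0
    simp [Matrix.adjugate_fin_two, Matrix.star_apply] at this
    rw [this]; ring
  have h11 : K 1 1 = (starRingEnd ℂ) (K 0 0) := by
    have := congrFun (congrFun hstar 0) 0
    simp [Matrix.adjugate_fin_two, Matrix.star_apply] at this
    rw [this]
  refine ⟨K 0 0, K 0 1, ?_, ?_⟩
  · ext i j
    fin_cases i <;> fin_cases j <;> simp [h10, h11]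
  · have := congrFun (congrFun hu' 0) 0
    simp [Matrix.mul_apply, Fin.sum_univ_two, Matrix.star_apply, Matrix.one_apply] at this
    have hre := congrArg Complex.re this
    simp [Complex.mul_re, Complex.conj_re, Complex.conj_im] at hre
    nlinarith [hre]

lemma trig_equiv {θ₁ θ₂ θ₃ : ℝ} (h1 : θ₁ ∈ Set.Icc 0 π) (h2 : θ₂ ∈ Set.Icc 0 π)
    (h3 : θ₃ ∈ Set.Icc 0 π) :
    (θ₁ + θ₂ + θ₃ = 2 * π ∨ θ₃ = θ₁ + θ₂ ∨ θ₂ = θ₁ + θ₃ ∨ θ₁ = θ₂ + θ₃) ↔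
      (Real.cos θ₃ = Real.cos (θ₁ + θ₂) ∨ Real.cos θ₃ = Real.cos (θ₁ - θ₂)) := by
  obtain ⟨h10, h11⟩ := h1
  obtain ⟨h20, h21⟩ := h2
  obtain ⟨h30, h31⟩ := h3
  constructor
  · rintro (h | h | h | h)
    · left
      rw [show θ₃ = 2 * π - (θ₁ + θ₂) by linarith]
      rw [Real.cos_sub]
      simp [Real.cos_two_pi, Real.sin_two_pi]
    · left; rw [h]
    · right; rw [show θ₁ - θ₂ = -θ₃ by linarith, Real.cos_neg]
    · right; rw [show θ₁ - θ₂ = θ₃ by linarith]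
  · rintro (h | h)
    · by_cases hc : θ₁ + θ₂ ≤ π
      · right; left
        exact Real.injOn_cos ⟨h30, h31⟩ ⟨by linarith, hc⟩ h
      · left
        have hcc : Real.cos θ₃ = Real.cos (2 * π - (θ₁ + θ₂)) := by
          rw [Real.cos_sub]; simp [Real.cos_two_pi, Real.sin_two_pi, h]
        have := Real.injOn_cos ⟨h30, h31⟩
          ⟨by linarith, by linarith⟩ hcc
        linarith
    · by_cases hc : θ₂ ≤ θ₁
      · right; right; right
        have := Real.injOn_cos ⟨h30, h31⟩ ⟨by linarith, by linarith⟩ h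
        linarith
      · right; right; left
        have hcc : Real.cos θ₃ = Real.cos (θ₂ - θ₁) := by
          rw [show θ₂ - θ₁ = -(θ₁ - θ₂) by ring, Real.cos_neg, h]
        have := Real.injOn_cos ⟨h30, h31⟩ ⟨by linarith, by linarith⟩ hcc
        linarith

lemma common_eig (a₁ b₁ : ℂ) (s₁ : ℝ)
    (hn1 : a₁.re ^ 2 + a₁.im ^ 2 + b₁.re ^ 2 + b₁.im ^ 2 = 1)
    (hs : s₁ ^ 2 = a₁.im ^ 2 + b₁.re ^ 2 + b₁.im ^ 2) :
    ∃ u : Fin 2 → ℂ, u ≠ 0 ∧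
      ∀ (a b : ℂ) (t : ℝ), b.re = t * b₁.re → b.im = t * b₁.im → a.im = t * a₁.im →
        a.re ^ 2 + a.im ^ 2 + b.re ^ 2 + b.im ^ 2 = 1 →
        ∃ lam : ℂ, lam ≠ 0 ∧
          (!![a, b; -(starRingEnd ℂ) b, (starRingEnd ℂ) a]).mulVec u = lam • u := by
  by_cases hb1 : b₁ = 0
  · -- diagonal case: u = e₀
    refine ⟨![1, 0], by
      intro h
      have := congrFun h 0
      simp at this, ?_⟩
    intro a b t hbre hbim haim hn
    have hb : b = 0 := by
      apply Complex.ext <;> simp [hbre, hbim, hb1]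
    refine ⟨a, ?_, ?_⟩
    · intro h
      rw [h, hb] at hn
      simp at hn
    · funext i
      fin_cases i <;> simp [Matrix.mulVec, dotProduct, Fin.sum_univ_two, hb]
  · refine ⟨![b₁, Complex.I * ((s₁ : ℂ) - (a₁.im : ℂ))], by
      intro h
      exact hb1 (congrFun h 0), ?_⟩
    intro a b t hbre hbim haim hn
    refine ⟨⟨a.re, t * s₁⟩, ?_, ?_⟩
    · intro h
      rw [Complex.ext_iff] at h
      simp at h
      obtain ⟨h1, h2⟩ := h
      rcases h2 with h2 | h2
      · rw [h2] at haim hbre hbim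
        nlinarith [hn]
      · rw [h2] at hs
        have e1 : a₁.im = 0 := by nlinarith [sq_nonneg a₁.im, sq_nonneg b₁.re, sq_nonneg b₁.im]
        have e2 : b₁.re = 0 := by nlinarith [sq_nonneg a₁.im, sq_nonneg b₁.re, sq_nonneg b₁.im]
        have e3 : b₁.im = 0 := by nlinarith [sq_nonneg a₁.im, sq_nonneg b₁.re, sq_nonneg b₁.im]
        rw [e1] at haim; rw [e2] at hbre; rw [e3] at hbim
        nlinarith [hn]
    · funext i
      fin_cases i <;>
        simp [Matrix.mulVec, dotProduct, Fin.sum_univ_two]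
      · apply Complex.ext <;> simp [Complex.mul_re, Complex.mul_im] <;> simp only [haim, hbre, hbim] <;> first | ring1 | linear_combination t * hs
      · apply Complex.ext <;> simp [Complex.mul_re, Complex.mul_im] <;> simp only [haim, hbre, hbim] <;> first | ring1 | linear_combination t * hs

lemma eig_parallel (a₁ b₁ a₂ b₂ x y lam mu : ℂ)
    (hu : ¬(x = 0 ∧ y = 0))
    (e11 : a₁ * x + b₁ * y = lam * x)
    (e12 : -(starRingEnd ℂ) b₁ * x + (starRingEnd ℂ) a₁ * y = lam * y)
    (e21 : a₂ * x + b₂ * y = mu * x)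
    (e22 : -(starRingEnd ℂ) b₂ * x + (starRingEnd ℂ) a₂ * y = mu * y) :
    b₂ * (starRingEnd ℂ) b₁ - b₁ * (starRingEnd ℂ) b₂ = 0 ∧
    b₂ * (a₁ - (starRingEnd ℂ) a₁) - b₁ * (a₂ - (starRingEnd ℂ) a₂) = 0 := by
  set e := b₂ * (starRingEnd ℂ) b₁ - b₁ * (starRingEnd ℂ) b₂ with he
  set f := b₂ * (a₁ - (starRingEnd ℂ) a₁) - b₁ * (a₂ - (starRingEnd ℂ) a₂) with hf
  -- conjugated equations
  have c11 := congrArg (starRingEnd ℂ) e11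
  have c12 := congrArg (starRingEnd ℂ) e12
  have c21 := congrArg (starRingEnd ℂ) e21
  have c22 := congrArg (starRingEnd ℂ) e22
  simp only [map_add, _root_.map_mul, map_neg, Complex.conj_conj] at c11 c12 c21 c22
  -- w = (-conj y, conj x) eigen equations
  have w11 : a₁ * (-(starRingEnd ℂ) y) + b₁ * (starRingEnd ℂ) x
      = (starRingEnd ℂ) lam * (-(starRingEnd ℂ) y) := by linear_combination -c12
  have w12 : -(starRingEnd ℂ) b₁ * (-(starRingEnd ℂ) y) + (starRingEnd ℂ) a₁ * (starRingEnd ℂ) x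
      = (starRingEnd ℂ) lam * (starRingEnd ℂ) x := by linear_combination c11
  have w21 : a₂ * (-(starRingEnd ℂ) y) + b₂ * (starRingEnd ℂ) x
      = (starRingEnd ℂ) mu * (-(starRingEnd ℂ) y) := by linear_combination -c22
  have w22 : -(starRingEnd ℂ) b₂ * (-(starRingEnd ℂ) y) + (starRingEnd ℂ) a₂ * (starRingEnd ℂ) x
      = (starRingEnd ℂ) mu * (starRingEnd ℂ) x := by linear_combination c21
  have E1 : e * x + f * y = 0 := by
    linear_combination (a₁ - lam) * e21 + b₁ * e22 - (a₂ - mu) * e11 - b₂ * e12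
  have E2 : e * (-(starRingEnd ℂ) y) + f * (starRingEnd ℂ) x = 0 := by
    linear_combination (a₁ - (starRingEnd ℂ) lam) * w21 + b₁ * w22
      - (a₂ - (starRingEnd ℂ) mu) * w11 - b₂ * w12
  have hn : x * (starRingEnd ℂ) x + y * (starRingEnd ℂ) y ≠ 0 := by
    intro h
    rw [Complex.mul_conj, Complex.mul_conj] at h
    have hre := congrArg Complex.re h
    push_cast at hre
    simp at hre
    rcases not_and_or.mp hu with hx | hy
    · exact hx (by
        have : Complex.normSq x = 0 := by nlinarith [Complex.normSq_nonneg x, Complex.normSq_nonneg y]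
        exact Complex.normSq_eq_zero.mp this)
    · exact hy (by
        have : Complex.normSq y = 0 := by nlinarith [Complex.normSq_nonneg x, Complex.normSq_nonneg y]
        exact Complex.normSq_eq_zero.mp this)
  constructor
  · have : e * (x * (starRingEnd ℂ) x + y * (starRingEnd ℂ) y) = 0 := by
      linear_combination (starRingEnd ℂ) x * E1 - y * E2
    exact (mul_eq_zero.mp this).resolve_right hn
  · have : f * (x * (starRingEnd ℂ) x + y * (starRingEnd ℂ) y) = 0 := by
      linear_combination (starRingEnd ℂ) y * E1 + x * E2
    exact (mul_eq_zero.mp this).resolve_right hn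

set_option maxHeartbeats 8000000 in
/-- A triple `K₁, K₂, K₃ ∈ SU(2)` with `K₁K₂K₃ = 1` is reducible
(has a common invariant line in `ℂ²`) if and only if its angle vector
`θᵢ = arccos(Re(tr Kᵢ)/2)` lies on the boundary of the tetrahedron `Γ`, i.e.
`θ₁+θ₂+θ₃ = 2π`, or `θ₃ = θ₁+θ₂`, or `θ₂ = θ₁+θ₃`, or `θ₁ = θ₂+θ₃`. -/
theorem su2_triple_reducible_iff_boundary
    (K₁ K₂ K₃ : Matrix (Fin 2) (Fin 2) ℂ)
    (h₁ : K₁ ∈ Matrix.specialUnitaryGroup (Fin 2) ℂ)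
    (h₂ : K₂ ∈ Matrix.specialUnitaryGroup (Fin 2) ℂ)
    (h₃ : K₃ ∈ Matrix.specialUnitaryGroup (Fin 2) ℂ)
    (hprod : K₁ * K₂ * K₃ = 1)
    (θ₁ θ₂ θ₃ : ℝ)
    (hθ₁ : θ₁ = Real.arccos ((Matrix.trace K₁).re / 2))
    (hθ₂ : θ₂ = Real.arccos ((Matrix.trace K₂).re / 2))
    (hθ₃ : θ₃ = Real.arccos ((Matrix.trace K₃).re / 2)) :
    (∃ V : Submodule ℂ (Fin 2 → ℂ), Module.finrank ℂ V = 1 ∧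
        ∀ x ∈ V, K₁.mulVec x ∈ V ∧ K₂.mulVec x ∈ V ∧ K₃.mulVec x ∈ V) ↔
      (θ₁ + θ₂ + θ₃ = 2 * Real.pi ∨ θ₃ = θ₁ + θ₂ ∨ θ₂ = θ₁ + θ₃ ∨ θ₁ = θ₂ + θ₃) := by
  obtain ⟨a₁, b₁, hK1, hn1⟩ := su2_entries h₁
  obtain ⟨a₂, b₂, hK2, hn2⟩ := su2_entries h₂
  have h₁₂ : K₁ * K₂ ∈ Matrix.specialUnitaryGroup (Fin 2) ℂ := mul_mem h₁ h₂
  obtain ⟨A, B, hK12, hn12⟩ := su2_entries h₁₂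
  -- the top-left entry of the product
  have hA : A = a₁ * a₂ - b₁ * (starRingEnd ℂ) b₂ := by
    have h00 := congrFun (congrFun hK12 0) 0
    rw [hK1, hK2, Matrix.mul_fin_two] at h00
    simp at h00
    rw [← h00]; ring
  -- K₃ = star (K₁ * K₂)
  have hK3 : K₃ = star (K₁ * K₂) := by
    have h12u : star (K₁ * K₂) * (K₁ * K₂) = 1 :=
      Matrix.mem_unitaryGroup_iff'.mp h₁₂.1
    calc K₃ = (star (K₁ * K₂) * (K₁ * K₂)) * K₃ := by rw [h12u, one_mul]
    _ = star (K₁ * K₂) * (K₁ * K₂ * K₃) := by rw [mul_assoc]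
    _ = star (K₁ * K₂) := by rw [hprod, mul_one]
  -- traces
  have htr1 : (Matrix.trace K₁).re / 2 = a₁.re := by
    rw [hK1, Matrix.trace_fin_two]; simp
  have htr2 : (Matrix.trace K₂).re / 2 = a₂.re := by
    rw [hK2, Matrix.trace_fin_two]; simp
  have htr3 : (Matrix.trace K₃).re / 2 = A.re := by
    rw [hK3, Matrix.star_eq_conjTranspose, Matrix.trace_conjTranspose, hK12,
      Matrix.trace_fin_two]
    simp
  rw [htr1] at hθ₁; rw [htr2] at hθ₂; rw [htr3] at hθ₃
  -- bounds
  have hb1 : -1 ≤ a₁.re ∧ a₁.re ≤ 1 := by constructor <;> nlinarith [hn1, sq_nonneg (a₁.re + 1), sq_nonneg (a₁.re - 1), sq_nonneg a₁.im, sq_nonneg b₁.re, sq_nonneg b₁.im]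
  have hb2 : -1 ≤ a₂.re ∧ a₂.re ≤ 1 := by constructor <;> nlinarith [hn2, sq_nonneg (a₂.re + 1), sq_nonneg (a₂.re - 1), sq_nonneg a₂.im, sq_nonneg b₂.re, sq_nonneg b₂.im]
  have hb3 : -1 ≤ A.re ∧ A.re ≤ 1 := by constructor <;> nlinarith [hn12, sq_nonneg (A.re + 1), sq_nonneg (A.re - 1), sq_nonneg A.im, sq_nonneg B.re, sq_nonneg B.im]
  have hI1 : θ₁ ∈ Set.Icc 0 Real.pi := by
    rw [hθ₁]; exact ⟨Real.arccos_nonneg _, Real.arccos_le_pi _⟩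
  have hI2 : θ₂ ∈ Set.Icc 0 Real.pi := by
    rw [hθ₂]; exact ⟨Real.arccos_nonneg _, Real.arccos_le_pi _⟩
  have hI3 : θ₃ ∈ Set.Icc 0 Real.pi := by
    rw [hθ₃]; exact ⟨Real.arccos_nonneg _, Real.arccos_le_pi _⟩
  have hcos1 : Real.cos θ₁ = a₁.re := by rw [hθ₁]; exact Real.cos_arccos hb1.1 hb1.2
  have hcos2 : Real.cos θ₂ = a₂.re := by rw [hθ₂]; exact Real.cos_arccos hb2.1 hb2.2
  have hcos3 : Real.cos θ₃ = A.re := by rw [hθ₃]; exact Real.cos_arccos hb3.1 hb3.2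
  have hsin1 : 0 ≤ Real.sin θ₁ := Real.sin_nonneg_of_mem_Icc hI1
  have hsin2 : 0 ≤ Real.sin θ₂ := Real.sin_nonneg_of_mem_Icc hI2
  have hsin1sq : Real.sin θ₁ ^ 2 = a₁.im ^ 2 + b₁.re ^ 2 + b₁.im ^ 2 := by
    rw [hθ₁, Real.sin_arccos, Real.sq_sqrt (by nlinarith [hn1])]; linarith [hn1]
  have hsin2sq : Real.sin θ₂ ^ 2 = a₂.im ^ 2 + b₂.re ^ 2 + b₂.im ^ 2 := by
    rw [hθ₂, Real.sin_arccos, Real.sq_sqrt (by nlinarith [hn2])]; linarith [hn2]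
  have hAre : A.re = a₁.re * a₂.re - (a₁.im * a₂.im + b₁.re * b₂.re + b₁.im * b₂.im) := by
    rw [hA]; simp [Complex.mul_re, Complex.sub_re]; ring
  rw [trig_equiv hI1 hI2 hI3, Real.cos_add, Real.cos_sub, hcos1, hcos2, hcos3]
  set s₁ := Real.sin θ₁ with hs₁
  set s₂ := Real.sin θ₂ with hs₂
  set D := a₁.im * a₂.im + b₁.re * b₂.re + b₁.im * b₂.im with hD
  -- reduce RHS to D = ±s₁s₂
  have hrhs : (A.re = a₁.re * a₂.re - s₁ * s₂ ∨ A.re = a₁.re * a₂.re + s₁ * s₂) ↔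
      (D = s₁ * s₂ ∨ D = -(s₁ * s₂)) := by
    constructor
    · rintro (h | h)
      · left; rw [hAre] at h; linarith
      · right; rw [hAre] at h; linarith
    · rintro (h | h)
      · left; rw [hAre, h]
      · right; rw [hAre, h]; ring
  rw [hrhs]
  -- the key equivalence
  constructor
  · -- reducible ⟹ D = ±s₁s₂
    rintro ⟨V, hrank, hinv⟩
    obtain ⟨v, hv0, hspan⟩ := finrank_eq_one_iff'.mp hrank
    set u : Fin 2 → ℂ := (v : Fin 2 → ℂ) with hu
    have hu0 : u ≠ 0 := fun h => hv0 (Subtype.ext h)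
    have hu' : ¬(u 0 = 0 ∧ u 1 = 0) := by
      rintro ⟨ha, hb⟩
      apply hu0; funext i; fin_cases i <;> assumption
    have hmem1 : K₁.mulVec u ∈ V := (hinv u v.2).1
    have hmem2 : K₂.mulVec u ∈ V := (hinv u v.2).2.1
    obtain ⟨lam, hlam⟩ := hspan ⟨K₁.mulVec u, hmem1⟩
    obtain ⟨mu, hmu⟩ := hspan ⟨K₂.mulVec u, hmem2⟩
    have e1 : K₁.mulVec u = lam • u := (congrArg Subtype.val hlam).symm
    have e2 : K₂.mulVec u = mu • u := (congrArg Subtype.val hmu).symm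
    rw [hK1] at e1
    rw [hK2] at e2
    have e11 := congrFun e1 0
    have e12 := congrFun e1 1
    have e21 := congrFun e2 0
    have e22 := congrFun e2 1
    simp [Matrix.mulVec, dotProduct, Fin.sum_univ_two] at e11 e12 e21 e22
    obtain ⟨he, hf⟩ := eig_parallel a₁ b₁ a₂ b₂ (u 0) (u 1) lam mu hu'
      (by linear_combination e11) (by linear_combination e12)
      (by linear_combination e21) (by linear_combination e22)
    -- real equations
    have hfre := congrArg Complex.re hf
    have hfim := congrArg Complex.im hf
    have heim := congrArg Complex.im he
    simp [Complex.mul_re, Complex.mul_im, Complex.sub_re, Complex.sub_im] at hfre hfim heim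
    have eqA : a₁.im * b₂.re = a₂.im * b₁.re := by linarith [hfim]
    have eqB : a₁.im * b₂.im = a₂.im * b₁.im := by linarith [hfre]
    have eqC : b₁.re * b₂.im = b₁.im * b₂.re := by linarith [heim]
    have hDsq : D ^ 2 = s₁ ^ 2 * s₂ ^ 2 := by
      rw [hsin1sq, hsin2sq, hD]
      linear_combination (a₂.im * b₁.re - a₁.im * b₂.re) * eqA +
        (a₂.im * b₁.im - a₁.im * b₂.im) * eqB + (b₁.im * b₂.re - b₁.re * b₂.im) * eqC
    have : |D| = |s₁ * s₂| := by
      rw [← sq_eq_sq_iff_abs_eq_abs]; rw [hDsq]; ring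
    exact abs_eq_abs.mp this
  · -- D = ±s₁s₂ ⟹ reducible
    intro hDpm
    have hDsq : D ^ 2 = s₁ ^ 2 * s₂ ^ 2 := by
      rcases hDpm with h | h <;> rw [h] <;> ring
    -- get common eigenvector data
    have key : ∃ (u : Fin 2 → ℂ) (lam mu : ℂ), u ≠ 0 ∧ lam ≠ 0 ∧ mu ≠ 0 ∧
        K₁.mulVec u = lam • u ∧ K₂.mulVec u = mu • u := by
      by_cases hs1 : s₁ = 0
      · have hz : a₁.im = 0 ∧ b₁.re = 0 ∧ b₁.im = 0 := by
          rw [hs1] at hsin1sq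
          refine ⟨?_, ?_, ?_⟩ <;>
            nlinarith [sq_nonneg a₁.im, sq_nonneg b₁.re, sq_nonneg b₁.im]
        obtain ⟨u, hu0, hkey⟩ := common_eig a₂ b₂ s₂ hn2 hsin2sq
        obtain ⟨mu, hmu0, hmu⟩ := hkey a₂ b₂ 1 (by ring) (by ring) (by ring) hn2
        obtain ⟨lam, hlam0, hlam⟩ := hkey a₁ b₁ 0
          (by rw [hz.2.1]; ring) (by rw [hz.2.2]; ring) (by rw [hz.1]; ring) hn1
        exact ⟨u, lam, mu, hu0, hlam0, hmu0, by rw [hK1]; exact hlam, by rw [hK2]; exact hmu⟩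
      · have hs1pos : 0 < s₁ := lt_of_le_of_ne hsin1 (Ne.symm hs1)
        have hS1pos : 0 < a₁.im ^ 2 + b₁.re ^ 2 + b₁.im ^ 2 := by nlinarith [hsin1sq]
        have hDsq' : D ^ 2 =
            (a₁.im ^ 2 + b₁.re ^ 2 + b₁.im ^ 2) * (a₂.im ^ 2 + b₂.re ^ 2 + b₂.im ^ 2) := by
          rw [← hsin1sq, ← hsin2sq]; exact hDsq
        have sumsq : ((a₁.im ^ 2 + b₁.re ^ 2 + b₁.im ^ 2) * a₂.im - D * a₁.im) ^ 2 +
            ((a₁.im ^ 2 + b₁.re ^ 2 + b₁.im ^ 2) * b₂.re - D * b₁.re) ^ 2 +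
            ((a₁.im ^ 2 + b₁.re ^ 2 + b₁.im ^ 2) * b₂.im - D * b₁.im) ^ 2 = 0 := by
          rw [hD] at hDsq' ⊢
          linear_combination (-(a₁.im ^ 2 + b₁.re ^ 2 + b₁.im ^ 2)) * hDsq'
        have e1 : ((a₁.im ^ 2 + b₁.re ^ 2 + b₁.im ^ 2) * a₂.im - D * a₁.im) ^ 2 = 0 := by
          linarith [sumsq, sq_nonneg ((a₁.im ^ 2 + b₁.re ^ 2 + b₁.im ^ 2) * b₂.re - D * b₁.re),
            sq_nonneg ((a₁.im ^ 2 + b₁.re ^ 2 + b₁.im ^ 2) * b₂.im - D * b₁.im),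
            sq_nonneg ((a₁.im ^ 2 + b₁.re ^ 2 + b₁.im ^ 2) * a₂.im - D * a₁.im)]
        have e2 : ((a₁.im ^ 2 + b₁.re ^ 2 + b₁.im ^ 2) * b₂.re - D * b₁.re) ^ 2 = 0 := by
          linarith [sumsq, sq_nonneg ((a₁.im ^ 2 + b₁.re ^ 2 + b₁.im ^ 2) * b₂.re - D * b₁.re),
            sq_nonneg ((a₁.im ^ 2 + b₁.re ^ 2 + b₁.im ^ 2) * b₂.im - D * b₁.im),
            sq_nonneg ((a₁.im ^ 2 + b₁.re ^ 2 + b₁.im ^ 2) * a₂.im - D * a₁.im)]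
        have e3 : ((a₁.im ^ 2 + b₁.re ^ 2 + b₁.im ^ 2) * b₂.im - D * b₁.im) ^ 2 = 0 := by
          linarith [sumsq, sq_nonneg ((a₁.im ^ 2 + b₁.re ^ 2 + b₁.im ^ 2) * b₂.re - D * b₁.re),
            sq_nonneg ((a₁.im ^ 2 + b₁.re ^ 2 + b₁.im ^ 2) * b₂.im - D * b₁.im),
            sq_nonneg ((a₁.im ^ 2 + b₁.re ^ 2 + b₁.im ^ 2) * a₂.im - D * a₁.im)]
        have c1 : (a₁.im ^ 2 + b₁.re ^ 2 + b₁.im ^ 2) * a₂.im = D * a₁.im := by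
          have := pow_eq_zero_iff (n := 2) (by norm_num) |>.mp e1; linarith
        have c2 : (a₁.im ^ 2 + b₁.re ^ 2 + b₁.im ^ 2) * b₂.re = D * b₁.re := by
          have := pow_eq_zero_iff (n := 2) (by norm_num) |>.mp e2; linarith
        have c3 : (a₁.im ^ 2 + b₁.re ^ 2 + b₁.im ^ 2) * b₂.im = D * b₁.im := by
          have := pow_eq_zero_iff (n := 2) (by norm_num) |>.mp e3; linarith
        have hS1ne : a₁.im ^ 2 + b₁.re ^ 2 + b₁.im ^ 2 ≠ 0 := ne_of_gt hS1pos
        obtain ⟨u, hu0, hkey⟩ := common_eig a₁ b₁ s₁ hn1 hsin1sq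
        obtain ⟨lam, hlam0, hlam⟩ := hkey a₁ b₁ 1 (by ring) (by ring) (by ring) hn1
        obtain ⟨mu, hmu0, hmu⟩ := hkey a₂ b₂ (D / (a₁.im ^ 2 + b₁.re ^ 2 + b₁.im ^ 2))
          (by field_simp; linear_combination c2) (by field_simp; linear_combination c3)
          (by field_simp; linear_combination c1) hn2
        exact ⟨u, lam, mu, hu0, hlam0, hmu0, by rw [hK1]; exact hlam, by rw [hK2]; exact hmu⟩
    obtain ⟨u, lam, mu, hu0, hlam0, hmu0, heig1, heig2⟩ := key
    -- K₃ acts on u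
    have h31 : K₃ * (K₁ * K₂) = 1 := mul_eq_one_comm.mp hprod
    have h12v : (K₁ * K₂).mulVec u = (mu * lam) • u := by
      rw [← Matrix.mulVec_mulVec, heig2, Matrix.mulVec_smul, heig1, smul_smul]
    have heig3 : K₃.mulVec u = (mu * lam)⁻¹ • u := by
      have h4 : K₃.mulVec ((K₁ * K₂).mulVec u) = u := by
        rw [Matrix.mulVec_mulVec, h31, Matrix.one_mulVec]
      calc K₃.mulVec u = K₃.mulVec ((mu * lam)⁻¹ • ((mu * lam) • u)) := by
            rw [smul_smul, inv_mul_cancel₀ (mul_ne_zero hmu0 hlam0), one_smul]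
      _ = (mu * lam)⁻¹ • K₃.mulVec ((mu * lam) • u) := by rw [Matrix.mulVec_smul]
      _ = (mu * lam)⁻¹ • u := by rw [← h12v, h4]
    refine ⟨Submodule.span ℂ {u}, finrank_span_singleton hu0, ?_⟩
    intro x hx
    obtain ⟨c, hc⟩ := Submodule.mem_span_singleton.mp hx
    have hmem : ∀ (M : Matrix (Fin 2) (Fin 2) ℂ) (d : ℂ), M.mulVec u = d • u →
        M.mulVec x ∈ Submodule.span ℂ {u} := by
      intro M d hMd
      rw [← hc, Matrix.mulVec_smul, hMd]
      exact Submodule.smul_mem _ _ (Submodule.smul_mem _ _ (Submodule.mem_span_singleton_self u))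
    exact ⟨hmem K₁ lam heig1, hmem K₂ mu heig2, hmem K₃ ((mu * lam)⁻¹) heig3⟩
end

section
/- Let A, B be 4×2 complex matrices and V₁, V₂, V₃ be 1×4 complex row vectors. For g ∈ SL(2, ℂ) and G ∈ SL(4, ℂ), consider the transformed data A' = G A g^{-1}, B' = G B g^{-1}, Vᵢ' = Vᵢ G^{-1}. Then the four quantities det[A | B] (the determinant of the 4×4 matrix whose first two columns are those of A and last two are those of B), det(of the 2×2 matrix with rows V₁B and V₂A), det(of the 2×2 matrix with rows V₁B and V₃A), and det(of the 2×2 matrix with rows V₂A and V₃B) are unchanged: each takes the same value on (A', B', V₁', V₂', V₃') as on (A, B, V₁, V₂, V₃). -/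
open Matrix

/-- The determinant of the `4×4` matrix `[A | B]` whose first two columns are those of `A`
and whose last two columns are those of `B`. -/
noncomputable def detAB (A B : Matrix (Fin 4) (Fin 2) ℂ) : ℂ :=
  ((Matrix.fromCols A B).submatrix id (finSumFinEquiv.symm : Fin (2 + 2) ≃ _)).det

/-- The determinant of the `2×2` matrix whose rows are the `1×4`-by-`4×2` products
`r` and `s` (regarded as row vectors of length 2). -/
noncomputable def detRows (r s : Matrix (Fin 1) (Fin 2) ℂ) : ℂ :=
  (Matrix.of ![r 0, s 0]).det

/-!
Under `(g, G)` the matrix `[A | B]` becomes `G [A | B] diag(g⁻¹, g⁻¹)`, so its determinant is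
multiplied by `det G · (det g)⁻² = 1`. In a product `Vᵢ X` with `X ∈ {A, B}` the factors `G⁻¹ G`
cancel, so each row `Vᵢ X` is multiplied on the right by `g⁻¹`, and the `2 × 2` determinants are
multiplied by `det g⁻¹ = 1`.
-/

lemma detRows_mul_right (r s : Matrix (Fin 1) (Fin 2) ℂ) (M : Matrix (Fin 2) (Fin 2) ℂ) :
    detRows (r * M) (s * M) = detRows r s * M.det := by
  have hrows : Matrix.of ![(r * M) 0, (s * M) 0] = Matrix.of ![r 0, s 0] * M := by
    ext i j
    fin_cases i <;> simp [Matrix.mul_apply]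
  rw [detRows, hrows, Matrix.det_mul, detRows]

lemma detAB_mul_left (G : Matrix (Fin 4) (Fin 4) ℂ) (A B : Matrix (Fin 4) (Fin 2) ℂ) :
    detAB (G * A) (G * B) = G.det * detAB A B := by
  rw [detAB, ← mul_fromCols, submatrix_mul _ _ id id _ Function.bijective_id, submatrix_id_id,
    det_mul, detAB]

lemma detAB_mul_right (A B : Matrix (Fin 4) (Fin 2) ℂ) (h : Matrix (Fin 2) (Fin 2) ℂ) :
    detAB (A * h) (B * h) = detAB A B * h.det ^ 2 := by
  have hcols : fromCols (A * h) (B * h) = fromCols A B * fromBlocks h 0 0 h := by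
    simp [fromCols_mul_fromBlocks]
  rw [detAB, hcols, ← submatrix_mul_equiv _ _ id finSumFinEquiv.symm finSumFinEquiv.symm, det_mul,
    det_submatrix_equiv_self, det_fromBlocks_zero₂₁, detAB, sq]

lemma Matrix.SpecialLinearGroup.mul_coe_inv_mul_coe_mul {n R m k : Type*} [Fintype n] [DecidableEq n]
    [CommRing R] (G : SpecialLinearGroup n R) (V : Matrix m n R) (X : Matrix n k R) :
    V * ((G⁻¹ : SpecialLinearGroup n R) : Matrix n n R) * ((G : Matrix n n R) * X) = V * X := by
  have hG : ((G⁻¹ : SpecialLinearGroup n R) : Matrix n n R) * G = 1 :=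
    congrArg Subtype.val (inv_mul_cancel G)
  rw [Matrix.mul_assoc, ← Matrix.mul_assoc _ _ X, hG, Matrix.one_mul]

/-- The four quantities `det[A|B]`, `det(V₁B; V₂A)`, `det(V₁B; V₃A)`,
`det(V₂A; V₃B)` of (4.26) are invariant under the action
`(g, G)·(A, B, Vᵢ) = (GAg⁻¹, GBg⁻¹, VᵢG⁻¹)` of `SL(2,ℂ) × SL(4,ℂ)`. -/
theorem framed_parabolic_invariants
    (A B : Matrix (Fin 4) (Fin 2) ℂ)
    (V₁ V₂ V₃ : Matrix (Fin 1) (Fin 4) ℂ)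
    (g : Matrix.SpecialLinearGroup (Fin 2) ℂ)
    (G : Matrix.SpecialLinearGroup (Fin 4) ℂ)
    (A' B' : Matrix (Fin 4) (Fin 2) ℂ)
    (V₁' V₂' V₃' : Matrix (Fin 1) (Fin 4) ℂ)
    (hA : A' = (G : Matrix (Fin 4) (Fin 4) ℂ) * A * ((g⁻¹ : Matrix.SpecialLinearGroup (Fin 2) ℂ) : Matrix (Fin 2) (Fin 2) ℂ))
    (hB : B' = (G : Matrix (Fin 4) (Fin 4) ℂ) * B * ((g⁻¹ : Matrix.SpecialLinearGroup (Fin 2) ℂ) : Matrix (Fin 2) (Fin 2) ℂ))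
    (hV₁ : V₁' = V₁ * ((G⁻¹ : Matrix.SpecialLinearGroup (Fin 4) ℂ) : Matrix (Fin 4) (Fin 4) ℂ))
    (hV₂ : V₂' = V₂ * ((G⁻¹ : Matrix.SpecialLinearGroup (Fin 4) ℂ) : Matrix (Fin 4) (Fin 4) ℂ))
    (hV₃ : V₃' = V₃ * ((G⁻¹ : Matrix.SpecialLinearGroup (Fin 4) ℂ) : Matrix (Fin 4) (Fin 4) ℂ)) :
    detAB A' B' = detAB A B ∧
    detRows (V₁' * B') (V₂' * A') = detRows (V₁ * B) (V₂ * A) ∧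
    detRows (V₁' * B') (V₃' * A') = detRows (V₁ * B) (V₃ * A) ∧
    detRows (V₂' * A') (V₃' * B') = detRows (V₂ * A) (V₃ * B) := by
  set h : Matrix (Fin 2) (Fin 2) ℂ := ↑g⁻¹
  have pairing : ∀ (V : Matrix (Fin 1) (Fin 4) ℂ) (X : Matrix (Fin 4) (Fin 2) ℂ),
      V * ((G⁻¹ : SpecialLinearGroup (Fin 4) ℂ) : Matrix (Fin 4) (Fin 4) ℂ) *
        ((G : Matrix (Fin 4) (Fin 4) ℂ) * X * h) = V * X * h := fun V X => by
    rw [Matrix.mul_assoc (↑G : Matrix (Fin 4) (Fin 4) ℂ) X h,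
      SpecialLinearGroup.mul_coe_inv_mul_coe_mul, Matrix.mul_assoc]
  have hdet : h.det = 1 := g⁻¹.det_coe
  subst hA hB hV₁ hV₂ hV₃
  refine ⟨?_, ?_, ?_, ?_⟩
  · rw [detAB_mul_right, detAB_mul_left, G.det_coe, hdet]
    ring
  all_goals rw [pairing, pairing, detRows_mul_right, hdet, mul_one]
end

section
/- Let v₁, v₂, v₃ and w₁, w₂, w₃ be vectors in ℂ² such that v₁, v₂, v₃ span ℂ². Write det(x, y) for the determinant of the 2×2 matrix with columns x, y. If det(v₁, v₂) = det(w₁, w₂), det(v₁, v₃) = det(w₁, w₃), and det(v₂, v₃) = det(w₂, w₃), then there exists a unique g ∈ SL(2, ℂ) with wᵢ = g·vᵢ for i = 1, 2, 3. -/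
/-! Since `v₁, v₂, v₃` span `ℂ²`, some pair, say `v₁, v₂`, has nonzero determinant `d` and is a
basis. Its column matrix `V` and that of `w₁, w₂` have the same determinant `d`, so
`g = W V⁻¹ ∈ SL(2, ℂ)` sends `v₁, v₂` to `w₁, w₂`. As `g` preserves determinants, `g v₃` and `w₃`
have the same determinants against the basis `w₁, w₂`, which pins a vector down by Cramer's rule.
Uniqueness holds because a linear map is determined on a spanning set. -/

open Matrix

/-- `det₂ x y` is the determinant of the `2×2` matrix with columns `x` and `y`. -/
def det₂ (x y : Fin 2 → ℂ) : ℂ := Matrix.det !![x 0, y 0; x 1, y 1]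

lemma det₂_eq (x y : Fin 2 → ℂ) : det₂ x y = x 0 * y 1 - y 0 * x 1 := by
  simp [det₂, Matrix.det_fin_two_of]

lemma det₂_swap (x y : Fin 2 → ℂ) : det₂ y x = -det₂ x y := by
  simp only [det₂_eq]; ring

lemma det₂_self (x : Fin 2 → ℂ) : det₂ x x = 0 := by
  simp only [det₂_eq]; ring

/-- Cramer's rule in `ℂ²`. -/
lemma det₂_smul_eq (x y z : Fin 2 → ℂ) : det₂ x y • z = det₂ z y • x + det₂ x z • y := by
  ext i
  fin_cases i <;> simp only [det₂_eq, Fin.isValue, Fin.zero_eta, Fin.mk_one, Pi.smul_apply,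
    smul_eq_mul, Pi.add_apply] <;> ring

lemma eq_of_det₂_eq_det₂ {a b x y : Fin 2 → ℂ} (hab : det₂ a b ≠ 0)
    (ha : det₂ x a = det₂ y a) (hb : det₂ x b = det₂ y b) : x = y := by
  refine smul_right_injective _ hab ?_
  dsimp only
  rw [det₂_smul_eq a b x, det₂_smul_eq a b y, det₂_swap x a, det₂_swap y a, ha, hb]

lemma det₂_eq_zero_of_mem_span {s : Set (Fin 2 → ℂ)} (hs : ∀ x ∈ s, ∀ y ∈ s, det₂ x y = 0)
    {x y : Fin 2 → ℂ} (hx : x ∈ Submodule.span ℂ s) (hy : y ∈ Submodule.span ℂ s) :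
    det₂ x y = 0 := by
  induction hx, hy using Submodule.span_induction₂ with
  | mem_mem x y hx hy => exact hs x hx y hy
  | zero_left | zero_right => simp [det₂_eq]
  | add_left x y z _ _ _ h₁ h₂ | add_right x y z _ _ _ h₁ h₂ =>
    simp only [det₂_eq, Pi.add_apply] at *; linear_combination h₁ + h₂
  | smul_left r x y _ _ h | smul_right r x y _ _ h =>
    simp only [det₂_eq, Pi.smul_apply, smul_eq_mul] at *; linear_combination r * h

lemma det₂_ne_zero_of_span_eq_top {v₁ v₂ v₃ : Fin 2 → ℂ}
    (hspan : Submodule.span ℂ {v₁, v₂, v₃} = ⊤) :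
    det₂ v₁ v₂ ≠ 0 ∨ det₂ v₁ v₃ ≠ 0 ∨ det₂ v₂ v₃ ≠ 0 := by
  by_contra! h
  obtain ⟨h12, h13, h23⟩ := h
  have h21 : det₂ v₂ v₁ = 0 := by rw [det₂_swap, h12, neg_zero]
  have h31 : det₂ v₃ v₁ = 0 := by rw [det₂_swap, h13, neg_zero]
  have h32 : det₂ v₃ v₂ = 0 := by rw [det₂_swap, h23, neg_zero]
  have hs : ∀ x ∈ ({v₁, v₂, v₃} : Set (Fin 2 → ℂ)), ∀ y ∈ ({v₁, v₂, v₃} : Set _),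
      det₂ x y = 0 := by
    rintro x (rfl | rfl | rfl) y (rfl | rfl | rfl) <;>
      simp only [det₂_self, *]
  have := det₂_eq_zero_of_mem_span hs (x := Pi.single 0 1) (y := Pi.single 1 1)
    (hspan ▸ Submodule.mem_top) (hspan ▸ Submodule.mem_top)
  simp [det₂_eq] at this

def cols₂ {R : Type*} (x y : Fin 2 → R) : Matrix (Fin 2) (Fin 2) R := !![x 0, y 0; x 1, y 1]

lemma det_cols₂ (x y : Fin 2 → ℂ) : (cols₂ x y).det = det₂ x y := rfl

lemma mul_cols₂ {R : Type*} [Semiring R] (A : Matrix (Fin 2) (Fin 2) R) (x y : Fin 2 → R) :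
    A * cols₂ x y = cols₂ (A *ᵥ x) (A *ᵥ y) := by
  ext i j
  fin_cases i <;> fin_cases j <;>
    simp [cols₂, Matrix.mul_apply, Matrix.mulVec, dotProduct, Fin.sum_univ_two]

lemma cols₂_inj {R : Type*} {x y x' y' : Fin 2 → R} :
    cols₂ x y = cols₂ x' y' ↔ x = x' ∧ y = y' := by
  refine ⟨fun h => ⟨funext fun i => ?_, funext fun i => ?_⟩, fun ⟨hx, hy⟩ => hx ▸ hy ▸ rfl⟩ <;>
    fin_cases i
  exacts [congrFun (congrFun h 0) 0, congrFun (congrFun h 1) 0, congrFun (congrFun h 0) 1,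
    congrFun (congrFun h 1) 1]

lemma det₂_mulVec (A : Matrix (Fin 2) (Fin 2) ℂ) (x y : Fin 2 → ℂ) :
    det₂ (A *ᵥ x) (A *ᵥ y) = A.det * det₂ x y := by
  rw [← det_cols₂, ← mul_cols₂, det_mul, det_cols₂]

lemma det₂_specialLinearGroup_mulVec (g : SpecialLinearGroup (Fin 2) ℂ) (x y : Fin 2 → ℂ) :
    det₂ ((g : Matrix (Fin 2) (Fin 2) ℂ) *ᵥ x) ((g : Matrix (Fin 2) (Fin 2) ℂ) *ᵥ y) =
      det₂ x y := by
  rw [det₂_mulVec, g.prop, one_mul]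

lemma exists_sl2_mulVec_eq_of_det₂_eq {a b a' b' : Fin 2 → ℂ} (hab : det₂ a b ≠ 0)
    (h : det₂ a b = det₂ a' b') :
    ∃ g : SpecialLinearGroup (Fin 2) ℂ,
      a' = (g : Matrix (Fin 2) (Fin 2) ℂ) *ᵥ a ∧ b' = (g : Matrix (Fin 2) (Fin 2) ℂ) *ᵥ b := by
  have hV : IsUnit (cols₂ a b).det := isUnit_iff_ne_zero.2 hab
  refine ⟨⟨cols₂ a' b' * (cols₂ a b)⁻¹, ?_⟩, ?_⟩
  · rw [det_mul, det_nonsing_inv, det_cols₂, det_cols₂, ← h, Ring.inverse_eq_inv',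
      mul_inv_cancel₀ hab]
  · exact cols₂_inj.1 ((nonsing_inv_mul_cancel_right _ _ hV).symm.trans (mul_cols₂ _ _ _))

lemma exists_sl2_mulVec_eq_of_pairwise_det₂_eq {v₁ v₂ v₃ w₁ w₂ w₃ : Fin 2 → ℂ}
    (hd : det₂ v₁ v₂ ≠ 0) (h12 : det₂ v₁ v₂ = det₂ w₁ w₂)
    (h13 : det₂ v₁ v₃ = det₂ w₁ w₃) (h23 : det₂ v₂ v₃ = det₂ w₂ w₃) :
    ∃ g : SpecialLinearGroup (Fin 2) ℂ,
      w₁ = (g : Matrix (Fin 2) (Fin 2) ℂ) *ᵥ v₁ ∧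
      w₂ = (g : Matrix (Fin 2) (Fin 2) ℂ) *ᵥ v₂ ∧
      w₃ = (g : Matrix (Fin 2) (Fin 2) ℂ) *ᵥ v₃ := by
  obtain ⟨g, rfl, rfl⟩ := exists_sl2_mulVec_eq_of_det₂_eq hd h12
  refine ⟨g, rfl, rfl, eq_of_det₂_eq_det₂ (h12 ▸ hd) ?_ ?_⟩
  · rw [det₂_specialLinearGroup_mulVec, det₂_swap, ← h13, det₂_swap, neg_neg]
  · rw [det₂_specialLinearGroup_mulVec, det₂_swap, ← h23, det₂_swap, neg_neg]

lemma Matrix.ext_of_mulVec_eq_of_span_eq_top {R m n : Type*} [CommSemiring R] [Fintype n]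
    {s : Set (n → R)} (hs : Submodule.span R s = ⊤) {A B : Matrix m n R}
    (h : ∀ x ∈ s, A *ᵥ x = B *ᵥ x) : A = B :=
  ext_iff_mulVec.2 <| LinearMap.congr_fun <|
    LinearMap.ext_on (f := A.mulVecLin) (g := B.mulVecLin) hs h

/-- If `v₁, v₂, v₃` span `ℂ²` and `w₁, w₂, w₃` have the same three
pairwise determinants, then there is a unique `g ∈ SL(2,ℂ)` with `wᵢ = g vᵢ`. -/
theorem sl2_unique_of_equal_pairwise_dets
    (v₁ v₂ v₃ w₁ w₂ w₃ : Fin 2 → ℂ)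
    (hspan : Submodule.span ℂ {v₁, v₂, v₃} = ⊤)
    (h12 : det₂ v₁ v₂ = det₂ w₁ w₂)
    (h13 : det₂ v₁ v₃ = det₂ w₁ w₃)
    (h23 : det₂ v₂ v₃ = det₂ w₂ w₃) :
    ∃! g : Matrix.SpecialLinearGroup (Fin 2) ℂ,
      w₁ = (g : Matrix (Fin 2) (Fin 2) ℂ).mulVec v₁ ∧
      w₂ = (g : Matrix (Fin 2) (Fin 2) ℂ).mulVec v₂ ∧
      w₃ = (g : Matrix (Fin 2) (Fin 2) ℂ).mulVec v₃ := by
  have h21 : det₂ v₂ v₁ = det₂ w₂ w₁ := by rw [det₂_swap, h12, ← det₂_swap]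
  have h31 : det₂ v₃ v₁ = det₂ w₃ w₁ := by rw [det₂_swap, h13, ← det₂_swap]
  have h32 : det₂ v₃ v₂ = det₂ w₃ w₂ := by rw [det₂_swap, h23, ← det₂_swap]
  obtain ⟨g, hg⟩ : ∃ g : SpecialLinearGroup (Fin 2) ℂ,
      w₁ = (g : Matrix (Fin 2) (Fin 2) ℂ) *ᵥ v₁ ∧ w₂ = (g : Matrix (Fin 2) (Fin 2) ℂ) *ᵥ v₂ ∧
        w₃ = (g : Matrix (Fin 2) (Fin 2) ℂ) *ᵥ v₃ := by
    rcases det₂_ne_zero_of_span_eq_top hspan with hd | hd | hd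
    · exact exists_sl2_mulVec_eq_of_pairwise_det₂_eq hd h12 h13 h23
    · obtain ⟨g, h₁, h₃, h₂⟩ := exists_sl2_mulVec_eq_of_pairwise_det₂_eq hd h13 h12 h32
      exact ⟨g, h₁, h₂, h₃⟩
    · obtain ⟨g, h₂, h₃, h₁⟩ := exists_sl2_mulVec_eq_of_pairwise_det₂_eq hd h23 h21 h31
      exact ⟨g, h₁, h₂, h₃⟩
  refine ⟨g, hg, fun g' hg' => Subtype.ext (ext_of_mulVec_eq_of_span_eq_top hspan ?_)⟩
  rintro x (rfl | rfl | rfl)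
  exacts [hg'.1.symm.trans hg.1, hg'.2.1.symm.trans hg.2.1, hg'.2.2.symm.trans hg.2.2]
end

section
/- Let A, B ∈ M_{4×2}(ℂ) be such that the span of the columns of A together with the columns of B is 3-dimensional, and such that for every (z₀, z₁) ∈ ℂ² with (z₀, z₁) ≠ (0, 0), the linear map z₀A + z₁B : ℂ² → ℂ⁴ is injective. Then there exist G ∈ GL(4, ℂ) and g ∈ GL(2, ℂ) such that G·A·g = A₀ and G·B·g = B₀, where A₀ has rows (1,0), (0,1), (0,0), (0,0) and B₀ has rows (0,0), (1,0), (0,1), (0,0). -/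
/-!
Both maps `A, B : ℂ² → ℂ⁴` are injective, so their ranges are planes whose sum is
3-dimensional; hence they meet in a line, spanned by `v = A u = B w`. Injectivity of the whole
pencil makes `(w, u)` a basis of `ℂ²`: a relation `s w + t u = 0` gives `(s A + t B) u = 0`.
The images `A w, v, B u` then span `Im A + Im B`, so they are independent, and completing them
by a fourth vector to a basis of `ℂ⁴` puts `(A, B)` in the normal form.
-/

open Matrix Module LinearMap Function

section Pencil

variable {K V W : Type*} [Field K] [AddCommGroup V] [Module K V] [AddCommGroup W] [Module K W]
  {f g : V →ₗ[K] W}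

theorem exists_apply_eq_apply_ne_zero_of_finrank_sup_lt [FiniteDimensional K V]
    (hf : Injective f) (hg : Injective g)
    (hsup : finrank K ↥(range f ⊔ range g) < 2 * finrank K V) :
    ∃ u w, f u = g w ∧ f u ≠ 0 := by
  have hgrassmann := Submodule.finrank_sup_add_finrank_inf_eq (range f) (range g)
  rw [finrank_range_of_inj hf, finrank_range_of_inj hg] at hgrassmann
  have hinf : range f ⊓ range g ≠ ⊥ := Submodule.one_le_finrank_iff.mp (by omega)
  obtain ⟨_, ⟨⟨u, rfl⟩, w, hw⟩, hu⟩ := (Submodule.ne_bot_iff _).mp hinf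
  exact ⟨u, w, hw.symm, hu⟩

theorem linearIndependent_pair_of_apply_eq_apply
    (hfg : ∀ a b : K, (a, b) ≠ (0, 0) → Injective ⇑(a • f + b • g))
    {u w : V} (hv : f u = g w) (hv0 : f u ≠ 0) : LinearIndependent K ![w, u] := by
  refine LinearIndependent.pair_iff.mpr fun s t hst => ?_
  have hker : (s • f + t • g) u = 0 := by
    calc (s • f + t • g) u = s • g w + t • g u := by simp [hv]
      _ = g (s • w + t • u) := by simp
      _ = 0 := by rw [hst, map_zero]
  by_contra hst0
  exact hv0 (by rw [hfg s t (by simpa using hst0) (hker.trans (map_zero _).symm), map_zero])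

theorem linearIndependent_apply_of_finrank_sup_eq_three [FiniteDimensional K W]
    (hV : finrank K V = 2) (hsup : finrank K ↥(range f ⊔ range g) = 3) {u w : V}
    (hv : f u = g w) (hwu : LinearIndependent K ![w, u]) :
    LinearIndependent K ![f w, f u, g u] := by
  have hspan : ∀ x : V, ∃ s t : K, s • w + t • u = x := fun x =>
    Submodule.mem_span_pair.mp <| by
      rw [← range_cons_cons_empty w u ![], hwu.span_eq_top_of_card_eq_finrank (by simp [hV])]
      trivial
  have hmem : ∀ i, ![f w, f u, g u] i ∈ Submodule.span K (Set.range ![f w, f u, g u]) :=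
    fun i => Submodule.subset_span ⟨i, rfl⟩
  have hle : range f ⊔ range g ≤ Submodule.span K (Set.range ![f w, f u, g u]) := by
    refine sup_le ?_ ?_ <;> rintro _ ⟨x, rfl⟩ <;> obtain ⟨s, t, rfl⟩ := hspan x
    · simpa using add_mem (Submodule.smul_mem _ s (hmem 0)) (Submodule.smul_mem _ t (hmem 1))
    · simpa [hv] using add_mem (Submodule.smul_mem _ s (hmem 1)) (Submodule.smul_mem _ t (hmem 2))
  rw [linearIndependent_iff_card_le_finrank_span, Fintype.card_fin, Set.finrank]
  exact hsup.symm.trans_le (Submodule.finrank_mono hle)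

theorem exists_basis_pencil_normal_form (hV : finrank K V = 2) (hW : finrank K W = 4)
    (hsup : finrank K ↥(range f ⊔ range g) = 3)
    (hfg : ∀ a b : K, (a, b) ≠ (0, 0) → Injective ⇑(a • f + b • g)) :
    ∃ (b : Basis (Fin 2) K V) (c : Basis (Fin 4) K W),
      f (b 0) = c 0 ∧ f (b 1) = c 1 ∧ g (b 0) = c 1 ∧ g (b 1) = c 2 := by
  have : FiniteDimensional K V := .of_finrank_pos (by omega)
  have : FiniteDimensional K W := .of_finrank_pos (by omega)
  have hf : Injective f := by simpa using hfg 1 0 (by simp)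
  have hg : Injective g := by simpa using hfg 0 1 (by simp)
  obtain ⟨u, w, hv, hv0⟩ := exists_apply_eq_apply_ne_zero_of_finrank_sup_lt hf hg (by omega)
  have hwu := linearIndependent_pair_of_apply_eq_apply hfg hv hv0
  obtain ⟨x, hx⟩ := exists_linearIndependent_snoc_of_lt_finrank
    (linearIndependent_apply_of_finrank_sup_eq_three hV hsup hv hwu) (by omega)
  refine ⟨basisOfLinearIndependentOfCardEqFinrank hwu (by simp [hV]),
    basisOfLinearIndependentOfCardEqFinrank hx (by simp [hW]), ?_, ?_, ?_, ?_⟩ <;>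
    simp [hv]

end Pencil

theorem Matrix.exists_GL_mul_mul_eq_toMatrix {R m n : Type*} [CommRing R]
    [Fintype m] [DecidableEq m] [Fintype n] [DecidableEq n]
    (b : Basis n R (n → R)) (c : Basis m R (m → R)) :
    ∃ (G : GL m R) (g : GL n R), ∀ A : Matrix m n R,
      (G : Matrix m m R) * A * (g : Matrix n n R) = LinearMap.toMatrix b c A.mulVecLin := by
  let _ := c.invertibleToMatrix (Pi.basisFun R m)
  let _ := (Pi.basisFun R n).invertibleToMatrix b
  refine ⟨unitOfInvertible (c.toMatrix (Pi.basisFun R m)),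
    unitOfInvertible ((Pi.basisFun R n).toMatrix b), fun A => ?_⟩
  rw [← basis_toMatrix_mul_linearMap_toMatrix_mul_basis_toMatrix b (Pi.basisFun R n) c
    (Pi.basisFun R m), ← Matrix.toLin'_apply', ← Matrix.toLin_eq_toLin',
    LinearMap.toMatrix_toLin]
  rfl

/-- normal form (4.34), Case (ii) of Theorem 4.30. If the columns of
`A` and `B` together span a 3-dimensional subspace of `ℂ⁴` and every nonzero member
`z₀A + z₁B` of the pencil is injective as a map `ℂ² → ℂ⁴`, then `(A, B)` can be brought
to the standard form by the `GL(4,ℂ) × GL(2,ℂ)`-action. -/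
theorem pencil_normal_form_case_ii
    (A B : Matrix (Fin 4) (Fin 2) ℂ)
    (hrank : Module.finrank ℂ
      (Submodule.span ℂ (Set.range Aᵀ ∪ Set.range Bᵀ)) = 3)
    (hinj : ∀ z₀ z₁ : ℂ, (z₀, z₁) ≠ (0, 0) →
      Function.Injective ((z₀ • A + z₁ • B).mulVec)) :
    ∃ (G : Matrix.GeneralLinearGroup (Fin 4) ℂ) (g : Matrix.GeneralLinearGroup (Fin 2) ℂ),
      (G : Matrix (Fin 4) (Fin 4) ℂ) * A * (g : Matrix (Fin 2) (Fin 2) ℂ) =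
        !![1, 0; 0, 1; 0, 0; 0, 0] ∧
      (G : Matrix (Fin 4) (Fin 4) ℂ) * B * (g : Matrix (Fin 2) (Fin 2) ℂ) =
        !![0, 0; 1, 0; 0, 1; 0, 0] := by
  have hsup : finrank ℂ ↥(range A.mulVecLin ⊔ range B.mulVecLin) = 3 := by
    rwa [range_mulVecLin, range_mulVecLin, ← Submodule.span_union]
  have hpencil : ∀ a b : ℂ, (a, b) ≠ (0, 0) →
      Injective ⇑(a • A.mulVecLin + b • B.mulVecLin) := by
    intro a b hab
    convert hinj a b hab using 1
    ext x
    simp [add_mulVec, smul_mulVec]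
  obtain ⟨b, c, hA₀, hA₁, hB₀, hB₁⟩ :=
    exists_basis_pencil_normal_form (by simp) (by simp) hsup hpencil
  obtain ⟨G, g, hGg⟩ := exists_GL_mul_mul_eq_toMatrix b c
  refine ⟨G, g, ?_, ?_⟩ <;> rw [hGg] <;> ext i j <;> fin_cases i <;> fin_cases j <;>
    simp [LinearMap.toMatrix_apply, hA₀, hA₁, hB₀, hB₁]
end

section
/- Let A, B ∈ M_{4×2}(ℂ) be such that the span of the columns of A together with the columns of B is 3-dimensional, A : ℂ² → ℂ⁴ is not injective, and for every (z₀, z₁) ∈ ℂ² with z₁ ≠ 0 the map z₀A + z₁B : ℂ² → ℂ⁴ is injective. Then there exist G ∈ GL(4, ℂ) and g ∈ GL(2, ℂ) such that G·A·g = A₀ and G·B·g = B₀, where A₀ has rows (0,1), (0,0), (0,0), (0,0) and B₀ has rows (0,0), (1,0), (0,1), (0,0). -/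
/-!
Pick `v ≠ 0` in the kernel of `A` and complete it to a basis `(v, w)` of `ℂ²`. Since `A v = 0`,
the columns of `A` and `B` span the same space as `A w, B v, B w`; that space is 3-dimensional,
so these three vectors are independent and extend by some `u` to a basis of `ℂ⁴`. In the bases
`(v, w)` and `(A w, B v, B w, u)` the maps `A` and `B` have the matrices of the normal form.
-/

open Matrix Module Submodule

theorem Matrix.span_range_transpose_eq_span_image_mulVec {R m n : Type*} [CommSemiring R]
    [Fintype n] (A : Matrix m n R) {s : Set (n → R)} (hs : span R s = ⊤) :
    span R (Set.range Aᵀ) = span R (A.mulVec '' s) := by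
  change span R (Set.range A.col) = _
  rw [← range_mulVecLin, LinearMap.range_eq_map, ← hs, map_span]
  rfl

section Pencil

variable {K m : Type*} [Field K] {A B : Matrix m (Fin 2) K} {v w : Fin 2 → K}

theorem span_range_transpose_union_le_span_mulVec_triple (hvw : LinearIndependent K ![v, w])
    (hAv : A *ᵥ v = 0) :
    span K (Set.range Aᵀ ∪ Set.range Bᵀ) ≤ span K (Set.range ![A *ᵥ w, B *ᵥ v, B *ᵥ w]) := by
  have hspan := hvw.span_eq_top_of_card_eq_finrank (by simp)
  rw [span_union, A.span_range_transpose_eq_span_image_mulVec hspan,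
    B.span_range_transpose_eq_span_image_mulVec hspan]
  refine sup_le (span_le.2 ?_) (span_le.2 ?_) <;> rintro _ ⟨_, ⟨i, rfl⟩, rfl⟩ <;> fin_cases i
  · simp [hAv]
  · exact subset_span ⟨0, rfl⟩
  · exact subset_span ⟨1, rfl⟩
  · exact subset_span ⟨2, rfl⟩

theorem linearIndependent_mulVec_triple_of_finrank_eq_three [Fintype m]
    (hvw : LinearIndependent K ![v, w]) (hAv : A *ᵥ v = 0)
    (hrank : finrank K (span K (Set.range Aᵀ ∪ Set.range Bᵀ)) = 3) :
    LinearIndependent K ![A *ᵥ w, B *ᵥ v, B *ᵥ w] :=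
  linearIndependent_iff_card_le_finrank_span.2 <|
    hrank.symm.le.trans (finrank_mono (span_range_transpose_union_le_span_mulVec_triple hvw hAv))

end Pencil

theorem Matrix.GeneralLinearGroup.inv_mul_mul_eq_of_mul_eq {R m n : Type*} [CommRing R]
    [Fintype m] [DecidableEq m] [Fintype n] [DecidableEq n] {A A₀ : Matrix m n R}
    (M : GL m R) (P : GL n R) (h : A * (P : Matrix n n R) = (M : Matrix m m R) * A₀) :
    (↑M⁻¹ : Matrix m m R) * A * (P : Matrix n n R) = A₀ := by
  rw [Matrix.mul_assoc, h, ← Matrix.mul_assoc, Units.inv_mul, Matrix.one_mul]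

theorem pencil_normal_form_case_iii_general
    (A B : Matrix (Fin 4) (Fin 2) ℂ)
    (hrank : Module.finrank ℂ
      (Submodule.span ℂ (Set.range Aᵀ ∪ Set.range Bᵀ)) = 3)
    (hA : ¬ Function.Injective A.mulVec) :
    ∃ (G : Matrix.GeneralLinearGroup (Fin 4) ℂ) (g : Matrix.GeneralLinearGroup (Fin 2) ℂ),
      (G : Matrix (Fin 4) (Fin 4) ℂ) * A * (g : Matrix (Fin 2) (Fin 2) ℂ) =
        !![0, 1; 0, 0; 0, 0; 0, 0] ∧
      (G : Matrix (Fin 4) (Fin 4) ℂ) * B * (g : Matrix (Fin 2) (Fin 2) ℂ) =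
        !![0, 0; 1, 0; 0, 1; 0, 0] := by
  obtain ⟨v, hAv, hv⟩ : ∃ v, A *ᵥ v = 0 ∧ v ≠ 0 := by
    rw [← coe_mulVecLin, injective_iff_map_eq_zero] at hA
    push Not at hA
    exact hA
  obtain ⟨w, hvw⟩ := exists_linearIndependent_pair_of_one_lt_finrank (R := ℂ) (by simp) hv
  have hindep := linearIndependent_mulVec_triple_of_finrank_eq_three hvw hAv hrank
  obtain ⟨u, hbasis⟩ := exists_linearIndependent_snoc_of_lt_finrank hindep (by simp)
  let P : Matrix (Fin 2) (Fin 2) ℂ := (of ![v, w])ᵀ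
  let M : Matrix (Fin 4) (Fin 4) ℂ := (of (Fin.snoc ![A *ᵥ w, B *ᵥ v, B *ᵥ w] u))ᵀ
  have hP : IsUnit P := linearIndependent_cols_iff_isUnit.mp hvw
  have hM : IsUnit M := linearIndependent_cols_iff_isUnit.mp hbasis
  refine ⟨hM.unit⁻¹, hP.unit, GeneralLinearGroup.inv_mul_mul_eq_of_mul_eq _ _ ?_,
    GeneralLinearGroup.inv_mul_mul_eq_of_mul_eq _ _ ?_⟩ <;> ext i j <;> fin_cases j
  · simpa [P, M, mul_apply, Fin.sum_univ_four, mulVec, dotProduct] using congrFun hAv i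
  all_goals simp [P, M, mul_apply, Fin.sum_univ_four, mulVec, dotProduct]

/-- normal form (4.36), Case (iii) of Theorem 4.30. If the columns of
`A` and `B` together span a 3-dimensional subspace of `ℂ⁴`, `A` itself is not injective,
but every member `z₀A + z₁B` of the pencil with `z₁ ≠ 0` is injective, then `(A, B)` can
be brought to the standard form by the `GL(4,ℂ) × GL(2,ℂ)`-action. -/
theorem pencil_normal_form_case_iii
    (A B : Matrix (Fin 4) (Fin 2) ℂ)
    (hrank : Module.finrank ℂ
      (Submodule.span ℂ (Set.range Aᵀ ∪ Set.range Bᵀ)) = 3)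
    (hA : ¬ Function.Injective A.mulVec)
    (hinj : ∀ z₀ z₁ : ℂ, z₁ ≠ 0 → Function.Injective ((z₀ • A + z₁ • B).mulVec)) :
    ∃ (G : Matrix.GeneralLinearGroup (Fin 4) ℂ) (g : Matrix.GeneralLinearGroup (Fin 2) ℂ),
      (G : Matrix (Fin 4) (Fin 4) ℂ) * A * (g : Matrix (Fin 2) (Fin 2) ℂ) =
        !![0, 1; 0, 0; 0, 0; 0, 0] ∧
      (G : Matrix (Fin 4) (Fin 4) ℂ) * B * (g : Matrix (Fin 2) (Fin 2) ℂ) =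
        !![0, 0; 1, 0; 0, 1; 0, 0] :=
  pencil_normal_form_case_iii_general A B hrank hA
end

section
/- Let A, B ∈ M_{4×2}(ℂ) be such that the span of the columns of A together with the columns of B is 2-dimensional, neither A : ℂ² → ℂ⁴ nor B : ℂ² → ℂ⁴ is injective, and for every (z₀, z₁) ∈ ℂ² with z₀ ≠ 0 and z₁ ≠ 0 the map z₀A + z₁B : ℂ² → ℂ⁴ is injective. Then there exist G ∈ GL(4, ℂ) and g ∈ GL(2, ℂ) such that G·A·g = A₀ and G·B·g = B₀, where A₀ has rows (0,1), (0,0), (0,0), (0,0) and B₀ has rows (0,0), (1,0), (0,0), (0,0). -/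
/-!
Choose nonzero `v ∈ ker A` and `w ∈ ker B`. Since `A + B` is injective, `v` and `w` form a
basis of `ℂ²`, and in this basis `A` and `B` become `[0 | A w]` and `[B v | 0]`. The columns of
`A` and `B` therefore span `span {A w, B v}`; as this space is 2-dimensional, `A w` and `B v`
are independent, so some `G ∈ GL(4, ℂ)` sends them to the first two standard basis vectors.
-/

open Matrix Function Submodule

section

variable {K m n ι : Type*}

theorem exists_linearEquiv_apply_eq_of_linearIndependent [Field K] {V : Type*}
    [AddCommGroup V] [Module K V] [FiniteDimensional K V] {u u' : ι → V}
    (hu : LinearIndependent K u) (hu' : LinearIndependent K u') :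
    ∃ e : V ≃ₗ[K] V, ∀ i, e (u i) = u' i := by
  obtain ⟨e, he⟩ := exists_linearEquiv_restrict_eq
    (hu.linearCombinationEquiv.symm ≪≫ₗ hu'.linearCombinationEquiv)
  refine ⟨e, fun i => ?_⟩
  have hi : u i ∈ span K (Set.range u) := subset_span ⟨i, rfl⟩
  have hrepr : hu.linearCombinationEquiv.symm ⟨u i, hi⟩ = Finsupp.single i 1 :=
    hu.repr_eq_single i _ rfl
  simpa [hrepr] using (he ⟨u i, hi⟩).symm

namespace Matrix

theorem exists_GL_mulVec_eq_of_linearIndependent [Field K] [Fintype n] [DecidableEq n]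
    {u u' : ι → n → K} (hu : LinearIndependent K u) (hu' : LinearIndependent K u') :
    ∃ G : GL n K, ∀ i, (G : Matrix n n K) *ᵥ u i = u' i := by
  obtain ⟨e, he⟩ := exists_linearEquiv_apply_eq_of_linearIndependent hu hu'
  refine ⟨GeneralLinearGroup.toLin.symm
    ((LinearMap.GeneralLinearGroup.generalLinearEquiv K _).symm e), fun i => ?_⟩
  rw [← he, ← mulVecLin_apply, ← GeneralLinearGroup.toLin_apply, MulEquiv.apply_symm_apply]
  rfl

theorem exists_ne_zero_mulVec_eq_zero_of_not_injective [CommRing K] [Fintype n]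
    {A : Matrix m n K} (hA : ¬ Injective A.mulVec) : ∃ v, v ≠ 0 ∧ A *ᵥ v = 0 := by
  contrapose! hA
  exact (injective_iff_map_eq_zero A.mulVecLin).2 fun v hv => by_contra (hA v · hv)

theorem mulVec_ne_zero_of_injective_add [Ring K] [Fintype n] {A B : Matrix m n K}
    (hAB : Injective (A + B).mulVec) {w : n → K} (hw : w ≠ 0) (hBw : B *ᵥ w = 0) :
    A *ᵥ w ≠ 0 := fun hAw => hw <| hAB <| by
  rw [add_mulVec, hAw, hBw, add_zero, mulVec_zero]

theorem linearIndependent_pair_of_injective_add [Field K] [Fintype n] {A B : Matrix m n K}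
    (hAB : Injective (A + B).mulVec) {v w : n → K} (hv : v ≠ 0) (hw : w ≠ 0)
    (hAv : A *ᵥ v = 0) (hBw : B *ᵥ w = 0) : LinearIndependent K ![v, w] := by
  have hAw := mulVec_ne_zero_of_injective_add hAB hw hBw
  have hBv := mulVec_ne_zero_of_injective_add (add_comm A B ▸ hAB) hv hAv
  refine LinearIndependent.pair_iff.2 fun s t hst => ⟨?_, ?_⟩
  · have := congrArg (B *ᵥ ·) hst
    simp only [mulVec_add, mulVec_smul, hBw, smul_zero, add_zero, mulVec_zero] at this
    exact (smul_eq_zero.1 this).resolve_right hBv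
  · have := congrArg (A *ᵥ ·) hst
    simp only [mulVec_add, mulVec_smul, hAv, smul_zero, zero_add, mulVec_zero] at this
    exact (smul_eq_zero.1 this).resolve_right hAw

theorem span_range_transpose_mul_of_isUnit [CommRing K] [Fintype n] [DecidableEq n]
    (A : Matrix m n K) {g : Matrix n n K} (hg : IsUnit g) :
    span K (Set.range (A * g)ᵀ) = span K (Set.range Aᵀ) := by
  have h := range_mulVecLin (A * g)
  rw [mulVecLin_mul, LinearMap.range_comp_of_range_eq_top _
    (LinearMap.range_eq_top.2 (mulVec_surjective_iff_isUnit.2 hg)), range_mulVecLin] at h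
  exact h.symm

theorem mul_transpose_of [NonUnitalNonAssocSemiring K] [Fintype n] (A : Matrix m n K)
    (u : ι → n → K) : A * (of u)ᵀ = (of fun j => A *ᵥ u j)ᵀ :=
  rfl

theorem exists_GL_mul_eq_of_mulVec_eq_zero [Field K] {A B : Matrix m (Fin 2) K}
    (hAB : Injective (A + B).mulVec) {v w : Fin 2 → K} (hv : v ≠ 0) (hw : w ≠ 0)
    (hAv : A *ᵥ v = 0) (hBw : B *ᵥ w = 0) :
    ∃ g : GL (Fin 2) K, A * (g : Matrix (Fin 2) (Fin 2) K) = (of ![0, A *ᵥ w])ᵀ ∧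
      B * (g : Matrix (Fin 2) (Fin 2) K) = (of ![B *ᵥ v, 0])ᵀ := by
  have hg : IsUnit (of ![v, w])ᵀ := (isUnit_transpose _).2 <|
    linearIndependent_rows_iff_isUnit.1 <| linearIndependent_pair_of_injective_add hAB hv hw hAv hBw
  refine ⟨hg.unit, ?_, ?_⟩ <;>
  · rw [IsUnit.unit_spec, mul_transpose_of]
    congr 2
    funext j
    fin_cases j <;> simp [hAv, hBw]

end Matrix

end

/-- normal form (4.38), Case (iv) of Theorem 4.30. If the columns of
`A` and `B` together span a 2-dimensional subspace of `ℂ⁴`, neither `A` nor `B` is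
injective, but every member `z₀A + z₁B` of the pencil with `z₀ ≠ 0` and `z₁ ≠ 0` is
injective, then `(A, B)` can be brought to the standard form by the
`GL(4,ℂ) × GL(2,ℂ)`-action. -/
theorem pencil_normal_form_case_iv
    (A B : Matrix (Fin 4) (Fin 2) ℂ)
    (hrank : Module.finrank ℂ
      (Submodule.span ℂ (Set.range Aᵀ ∪ Set.range Bᵀ)) = 2)
    (hA : ¬ Function.Injective A.mulVec)
    (hB : ¬ Function.Injective B.mulVec)
    (hinj : ∀ z₀ z₁ : ℂ, z₀ ≠ 0 → z₁ ≠ 0 →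
      Function.Injective ((z₀ • A + z₁ • B).mulVec)) :
    ∃ (G : Matrix.GeneralLinearGroup (Fin 4) ℂ) (g : Matrix.GeneralLinearGroup (Fin 2) ℂ),
      (G : Matrix (Fin 4) (Fin 4) ℂ) * A * (g : Matrix (Fin 2) (Fin 2) ℂ) =
        !![0, 1; 0, 0; 0, 0; 0, 0] ∧
      (G : Matrix (Fin 4) (Fin 4) ℂ) * B * (g : Matrix (Fin 2) (Fin 2) ℂ) =
        !![0, 0; 1, 0; 0, 0; 0, 0] := by
  obtain ⟨v, hv, hAv⟩ := exists_ne_zero_mulVec_eq_zero_of_not_injective hA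
  obtain ⟨w, hw, hBw⟩ := exists_ne_zero_mulVec_eq_zero_of_not_injective hB
  have hAB : Injective (A + B).mulVec := by simpa using hinj 1 1 one_ne_zero one_ne_zero
  obtain ⟨g, hAg, hBg⟩ := exists_GL_mul_eq_of_mulVec_eq_zero hAB hv hw hAv hBw
  have hspan :
      span ℂ (Set.range Aᵀ ∪ Set.range Bᵀ) = span ℂ (Set.range ![A *ᵥ w, B *ᵥ v]) := by
    rw [span_union, ← span_range_transpose_mul_of_isUnit A g.isUnit,
      ← span_range_transpose_mul_of_isUnit B g.isUnit, hAg, hBg]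
    change span ℂ (Set.range ![0, A *ᵥ w]) ⊔ span ℂ (Set.range ![B *ᵥ v, 0]) = _
    simp [range_cons, span_insert, sup_comm]
  have hind : LinearIndependent ℂ ![A *ᵥ w, B *ᵥ v] := by
    rw [linearIndependent_iff_card_eq_finrank_span, Set.finrank, ← hspan, hrank, Fintype.card_fin]
  obtain ⟨G, hG⟩ := exists_GL_mulVec_eq_of_linearIndependent hind
    ((Pi.basisFun ℂ (Fin 4)).linearIndependent.comp ![0, 1] (by decide))
  have hGa : (G : Matrix (Fin 4) (Fin 4) ℂ) *ᵥ (A *ᵥ w) = Pi.single 0 1 := by simpa using hG 0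
  have hGb : (G : Matrix (Fin 4) (Fin 4) ℂ) *ᵥ (B *ᵥ v) = Pi.single 1 1 := by simpa using hG 1
  refine ⟨G, g, ?_, ?_⟩
  · rw [Matrix.mul_assoc, hAg, mul_transpose_of]
    ext i j; fin_cases i <;> fin_cases j <;> simp [hGa]
  · rw [Matrix.mul_assoc, hBg, mul_transpose_of]
    ext i j; fin_cases i <;> fin_cases j <;> simp [hGb]
end
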